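/- arXiv:1901.00988 — 9 statements merged into one kernel-verified Lean document; each statement's English description precedes it below -/
import Mathlib

section
/- For all natural numbers k ≤ n with n ≥ 1, the sum ∑_{i=0}^{k} C(n,i) is at most (e·n/k)^k, where e is Euler's number (with the convention that the bound is interpreted as holding for k ≥ 1; for k = 0 the sum is 1). -/
open Finset

theorem sum_range_choose_mul_pow_le_one_add_pow {R : Type*} [CommSemiring R] [PartialOrder R]
    [IsOrderedRing R] {n k : ℕ} (hkn : k ≤ n) {x : R} (hx₀ : 0 ≤ x) (hx₁ : x ≤ 1) :
    (∑ i ∈ range (k + 1), (n.choose i : R)) * x ^ k ≤ (1 + x) ^ n := by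
  calc (∑ i ∈ range (k + 1), (n.choose i : R)) * x ^ k
      ≤ ∑ i ∈ range (k + 1), x ^ i * (n.choose i : R) := by
        rw [sum_mul]
        refine sum_le_sum fun i hi => ?_
        rw [mul_comm]
        exact mul_le_mul_of_nonneg_right
          (pow_le_pow_of_le_one hx₀ hx₁ (Nat.lt_succ_iff.mp (mem_range.mp hi))) (by positivity)
    _ ≤ ∑ i ∈ range (n + 1), x ^ i * (n.choose i : R) :=
        sum_le_sum_of_subset_of_nonneg (range_subset_range.mpr (by omega))
          fun _ _ _ => by positivity
    _ = (1 + x) ^ n := by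
        rw [add_comm (1 : R), add_pow]
        simp only [one_pow, mul_one]

theorem one_add_div_pow_le_exp (n k : ℕ) : (1 + (k : ℝ) / n) ^ n ≤ Real.exp k := by
  have h := Real.one_sub_div_pow_le_exp_neg (n := n) (t := -k)
    ((neg_nonpos.mpr k.cast_nonneg).trans n.cast_nonneg)
  rwa [neg_div, sub_neg_eq_add, neg_neg] at h

theorem stmt_1_general (n k : ℕ) (hkn : k ≤ n) :
    (∑ i ∈ Finset.range (k + 1), (n.choose i : ℝ)) ≤ (Real.exp 1 * n / k) ^ k := by
  rcases k.eq_zero_or_pos with rfl | hk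
  · simp
  have hn : (0 : ℝ) < n := by exact_mod_cast hk.trans_le hkn
  have hx : (0 : ℝ) < (k / n) ^ k := by positivity
  have hbound : (∑ i ∈ range (k + 1), (n.choose i : ℝ)) * (k / n) ^ k ≤ Real.exp 1 ^ k :=
    calc _ ≤ (1 + (k : ℝ) / n) ^ n :=
          sum_range_choose_mul_pow_le_one_add_pow hkn (by positivity)
            (div_le_one_of_le₀ (by exact_mod_cast hkn) hn.le)
      _ ≤ Real.exp k := one_add_div_pow_le_exp n k
      _ = Real.exp 1 ^ k := by rw [← Real.exp_nat_mul, mul_one]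
  calc _ ≤ Real.exp 1 ^ k / (k / n) ^ k := (le_div_iff₀ hx).mpr hbound
    _ = (Real.exp 1 * n / k) ^ k := by rw [← div_pow, div_div_eq_mul_div]

/-- For all natural numbers `1 ≤ k ≤ n`, `∑_{i=0}^{k} C(n,i) ≤ (e·n/k)^k`. -/
theorem stmt_1 (n k : ℕ) (hn : 1 ≤ n) (hk : 1 ≤ k) (hkn : k ≤ n) :
    (∑ i ∈ Finset.range (k + 1), (n.choose i : ℝ)) ≤ (Real.exp 1 * n / k) ^ k :=
  stmt_1_general n k hkn
end

section
/- Let v ∈ ℝ^n be a nonzero vector. Then there exists a nonempty subset S ⊆ {1,...,n} such that |S| ≥ ‖v‖₁/(2‖v‖∞) and |S| · min_{i∈S} |v_i| ≥ ‖v‖₁/(2(1 + ln n)). -/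
/-!
Order the entries decreasingly as `a₀ ≥ a₁ ≥ ⋯ ≥ a_{n-1}` and let `S_k` be the set of the `k + 1`
largest ones, so that `|S_k| · min_{S_k} |vᵢ| = (k + 1) aₖ`. If no `k` with `k + 1 ≥ ‖v‖₁ / (2‖v‖∞)`
had `(k + 1) aₖ ≥ ‖v‖₁ / (2 H)`, where `H = 1 + ln n`, then the entries with `k + 1` below the
threshold would contribute less than `‖v‖₁ / 2` (there are fewer than `‖v‖₁ / (2‖v‖∞)` of them),
and the others at most `‖v‖₁ / (2H) · ∑ 1/(k+1) ≤ ‖v‖₁ / 2`, which is absurd.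
-/

open Finset

theorem harmonic_eq_sum_fin (n : ℕ) : (harmonic n : ℝ) = ∑ k : Fin n, ((k : ℝ) + 1)⁻¹ := by
  rw [Fin.sum_univ_eq_sum_range (fun k => ((k : ℝ) + 1)⁻¹), harmonic]
  push_cast
  rfl

theorem card_filter_succ_lt {n : ℕ} {c : ℝ} (hc : 0 < c) :
    (#{k : Fin n | (k : ℝ) + 1 < c} : ℝ) < c := by
  rcases eq_empty_or_nonempty {k : Fin n | (k : ℝ) + 1 < c} with hA | hA
  · simpa [hA] using hc
  set m := max' _ hA
  have hsub : ({k : Fin n | (k : ℝ) + 1 < c} : Finset (Fin n)) ⊆ Iic m :=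
    fun k hk => mem_Iic.2 (le_max' _ k hk)
  calc (#{k : Fin n | (k : ℝ) + 1 < c} : ℝ) ≤ #(Iic m) := by exact_mod_cast card_le_card hsub
    _ = (m : ℝ) + 1 := by simp
    _ < c := (mem_filter.1 (max'_mem _ hA)).2

theorem exists_le_succ_and_le_succ_mul {n : ℕ} (a : Fin n → ℝ) {M c D : ℝ} (hM : 0 < M)
    (hc : 0 < c) (hD : 0 ≤ D) (haM : ∀ k, a k ≤ M)
    (hsum : c * M + D * harmonic n ≤ ∑ k, a k) :
    ∃ k : Fin n, c ≤ k + 1 ∧ D ≤ (k + 1) * a k := by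
  by_contra! h
  set A : Finset (Fin n) := {k | (k : ℝ) + 1 < c}
  have hsmall : ∑ k ∈ A, a k < c * M :=
    calc ∑ k ∈ A, a k ≤ #A * M := by simpa using sum_le_card_nsmul A a M fun k _ => haM k
      _ < c * M := mul_lt_mul_of_pos_right (card_filter_succ_lt hc) hM
  have hlarge : ∑ k ∈ Aᶜ, a k ≤ D * harmonic n :=
    calc ∑ k ∈ Aᶜ, a k ≤ ∑ k ∈ Aᶜ, D * ((k : ℝ) + 1)⁻¹ := by
          refine sum_le_sum fun k hk => ?_
          have := h k (not_lt.1 fun hk' => mem_compl.1 hk (mem_filter.2 ⟨mem_univ k, hk'⟩))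
          rw [← div_eq_mul_inv, le_div_iff₀ (by positivity)]
          linarith
      _ ≤ ∑ k : Fin n, D * ((k : ℝ) + 1)⁻¹ :=
          sum_le_sum_of_subset_of_nonneg (subset_univ _) fun _ _ _ => by positivity
      _ = D * harmonic n := by rw [← mul_sum, harmonic_eq_sum_fin]
  rw [← sum_add_sum_compl A] at hsum
  linarith

theorem Tuple.exists_perm_antitone {α : Type*} [LinearOrder α] {n : ℕ} (f : Fin n → α) :
    ∃ σ : Equiv.Perm (Fin n), Antitone (f ∘ σ) :=
  ⟨sort (OrderDual.toDual ∘ f), monotone_toDual_comp_iff.1 (monotone_sort _)⟩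

theorem card_map_Iic_and_le_of_antitone {α : Type*} [Preorder α] {n : ℕ} {f : Fin n → α}
    {σ : Equiv.Perm (Fin n)} (hσ : Antitone (f ∘ σ)) (k : Fin n) :
    #((Iic k).map σ.toEmbedding) = (k : ℕ) + 1 ∧
      ∀ i ∈ (Iic k).map σ.toEmbedding, f (σ k) ≤ f i := by
  refine ⟨by simp, fun i hi => ?_⟩
  obtain ⟨j, hj, rfl⟩ := mem_map.1 hi
  exact hσ (mem_Iic.1 hj)

theorem stmt_3_general (n : ℕ) (v : Fin n → ℝ) (hv : v ≠ 0) :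
    ∃ S : Finset (Fin n), S.Nonempty ∧
      (∑ i, |v i|) / (2 * ⨆ i, |v i|) ≤ (S.card : ℝ) ∧
      (∑ i, |v i|) / (2 * (1 + Real.log n)) ≤ (S.card : ℝ) * ⨅ i : S, |v i.1| := by
  set L := ∑ i, |v i|
  set M := ⨆ i, |v i|
  set H := 1 + Real.log n
  obtain ⟨i₀, hi₀⟩ := Function.ne_iff.1 hv
  have hle_M (i) : |v i| ≤ M := le_ciSup (f := fun i => |v i|) (Set.finite_range _).bddAbove i
  have hM : 0 < M := (abs_pos.2 hi₀).trans_le (hle_M i₀)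
  have hL : 0 < L := sum_pos' (fun i _ => abs_nonneg _) ⟨i₀, mem_univ _, abs_pos.2 hi₀⟩
  have hH : 0 < H := by
    have : (1 : ℝ) ≤ n := by exact_mod_cast i₀.pos
    linarith [Real.log_nonneg this]
  obtain ⟨σ, hσ⟩ := Tuple.exists_perm_antitone fun i => |v i|
  have hsum : L / (2 * M) * M + L / (2 * H) * harmonic n ≤ ∑ k, |v (σ k)| :=
    calc L / (2 * M) * M + L / (2 * H) * harmonic n ≤ L / (2 * M) * M + L / (2 * H) * H := by
          gcongr
          exact harmonic_le_one_add_log n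
      _ = L := by field_simp; ring
      _ = ∑ k, |v (σ k)| := (Equiv.sum_comp σ (fun i => |v i|)).symm
  obtain ⟨k, hck, hDk⟩ := exists_le_succ_and_le_succ_mul (fun k => |v (σ k)|) hM (by positivity)
    (by positivity) (fun k => hle_M _) hsum
  obtain ⟨hcard, hmin⟩ := card_map_Iic_and_le_of_antitone hσ k
  set S := (Iic k).map σ.toEmbedding
  have hS : S.Nonempty := card_pos.1 (by omega)
  have : Nonempty S := hS.to_subtype
  refine ⟨S, hS, by rwa [hcard, Nat.cast_succ], ?_⟩
  rw [hcard, Nat.cast_succ]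
  exact hDk.trans (mul_le_mul_of_nonneg_left (le_ciInf fun i => hmin i i.2) (by positivity))

/-- Let `v ∈ ℝ^n` be a nonzero vector. Then there is a nonempty subset `S ⊆ {1,...,n}` with
`|S| ≥ ‖v‖₁/(2‖v‖∞)` and `|S| · min_{i∈S} |v_i| ≥ ‖v‖₁/(2(1 + ln n))`. -/
theorem stmt_3 (n : ℕ) (hn : 1 ≤ n) (v : Fin n → ℝ) (hv : v ≠ 0) :
    ∃ S : Finset (Fin n), S.Nonempty ∧
      (∑ i, |v i|) / (2 * ⨆ i, |v i|) ≤ (S.card : ℝ) ∧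
      (∑ i, |v i|) / (2 * (1 + Real.log n)) ≤ (S.card : ℝ) * ⨅ i : S, |v i.1| :=
  stmt_3_general n v hv
end

section
/- Fix θ > 0 and let v ∈ ℝ^n with ‖v‖₁ ≥ θ. Then there exists a subset S ⊆ {1,...,n} such that |S| ≥ ‖v‖₁/(2‖v‖∞), min_{i∈S} |v_i| ≥ θ/(2|S|(1 + ln n)), and ∑_{i∉S} |v_i| < θ. -/
/-- Fix `θ > 0` and let `v ∈ ℝ^n` with `‖v‖₁ ≥ θ`. Then there is `S ⊆ {1,...,n}` with
`|S| ≥ ‖v‖₁/(2‖v‖∞)`, `min_{i∈S} |v_i| ≥ θ/(2|S|(1 + ln n))`, and `∑_{i∉S} |v_i| < θ`. -/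
theorem stmt_4 (n : ℕ) (hn : 1 ≤ n) (θ : ℝ) (hθ : 0 < θ) (v : Fin n → ℝ)
    (hv : θ ≤ ∑ i, |v i|) :
    ∃ S : Finset (Fin n),
      (∑ i, |v i|) / (2 * ⨆ i, |v i|) ≤ (S.card : ℝ) ∧
      θ / (2 * (S.card : ℝ) * (1 + Real.log n)) ≤ ⨅ i : S, |v i.1| ∧
      ∑ i ∈ Sᶜ, |v i| < θ := by
  have hne : Nonempty (Fin n) := ⟨⟨0, hn⟩⟩
  set f : Fin n → ℝ := fun i => |v i| with hf
  have hf0 : ∀ i, 0 ≤ f i := fun i => abs_nonneg _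
  set e : Equiv.Perm (Fin n) := (Fin.revPerm).trans (Tuple.sort f) with he
  set a : Fin n → ℝ := fun j => f (e j) with ha
  have haanti : Antitone a := by
    intro j j' hjj'
    exact Tuple.monotone_sort f (Fin.rev_le_rev.mpr hjj')
  have hsum_a : ∑ j, a j = ∑ i, f i := Equiv.sum_comp e f
  have hlog : (0:ℝ) < 1 + Real.log n := by
    have : (0:ℝ) ≤ Real.log n := Real.log_nonneg (by exact_mod_cast hn)
    linarith
  set c : Fin n → ℝ := fun j => θ / (2 * ((j:ℕ) + 1) * (1 + Real.log n)) with hc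
  have hc0 : ∀ j, 0 < c j := by
    intro j
    apply div_pos hθ
    positivity
  -- sum of c is at most θ/2
  have hsumc : ∑ j, c j ≤ θ / 2 := by
    have h1 : ∑ j : Fin n, c j
        = (θ / (2 * (1 + Real.log n))) * ∑ j : Fin n, ((j:ℕ) + 1 : ℝ)⁻¹ := by
      rw [Finset.mul_sum]
      refine Finset.sum_congr rfl fun j _ => ?_
      rw [hc]
      field_simp
    have h2 : ∑ j : Fin n, ((j:ℕ) + 1 : ℝ)⁻¹ ≤ 1 + Real.log n := by
      have := harmonic_le_one_add_log n
      have heq : ((harmonic n : ℚ) : ℝ) = ∑ j : Fin n, ((j:ℕ) + 1 : ℝ)⁻¹ := by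
        rw [harmonic]
        push_cast
        rw [Finset.sum_range fun i => ((i:ℝ) + 1)⁻¹]
      linarith [heq ▸ this]
    calc ∑ j, c j = (θ / (2 * (1 + Real.log n))) * ∑ j : Fin n, ((j:ℕ) + 1 : ℝ)⁻¹ := h1
      _ ≤ (θ / (2 * (1 + Real.log n))) * (1 + Real.log n) := by
          apply mul_le_mul_of_nonneg_left h2
          positivity
      _ = θ / 2 := by field_simp
  -- the set K of indices where a j ≥ c j is nonempty
  set K : Finset (Fin n) := Finset.univ.filter (fun j => c j ≤ a j) with hK
  have hKne : K.Nonempty := by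
    by_contra hemp
    rw [Finset.not_nonempty_iff_eq_empty] at hemp
    have hall : ∀ j : Fin n, a j < c j := by
      intro j
      by_contra h
      have : j ∈ K := Finset.mem_filter.mpr ⟨Finset.mem_univ _, le_of_not_gt h⟩
      simp [hemp] at this
    have : ∑ j, a j < ∑ j, c j :=
      Finset.sum_lt_sum_of_nonempty Finset.univ_nonempty (fun j _ => hall j)
    rw [hsum_a] at this
    linarith
  set k : Fin n := K.max' hKne with hk
  have hkK : k ∈ K := K.max'_mem hKne
  have hkc : c k ≤ a k := (Finset.mem_filter.mp hkK).2
  set S : Finset (Fin n) := (Finset.Iic k).image e with hS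
  have hcard : S.card = (k:ℕ) + 1 := by
    rw [hS, Finset.card_image_of_injective _ e.injective, Fin.card_Iic]
  have hSsum' : ∑ i ∈ S, f i = ∑ j ∈ Finset.Iic k, a j := by
    rw [hS, Finset.sum_image (fun x _ y _ h => e.injective h)]
  -- complement sum
  have hcompl : ∑ i ∈ Sᶜ, f i = ∑ j ∈ (Finset.Iic k)ᶜ, a j := by
    have h1 : ∑ i ∈ S, f i + ∑ i ∈ Sᶜ, f i = ∑ i, f i := Finset.sum_add_sum_compl S f
    have h2 : ∑ j ∈ Finset.Iic k, a j + ∑ j ∈ (Finset.Iic k)ᶜ, a j = ∑ j, a j :=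
      Finset.sum_add_sum_compl _ a
    rw [hSsum'] at h1
    linarith [hsum_a]
  have htail : ∑ j ∈ (Finset.Iic k)ᶜ, a j ≤ θ / 2 := by
    have hbound : ∀ j ∈ (Finset.Iic k)ᶜ, a j ≤ c j := by
      intro j hj
      rw [Finset.mem_compl, Finset.mem_Iic] at hj
      by_contra h
      have hjK : j ∈ K := Finset.mem_filter.mpr ⟨Finset.mem_univ _, le_of_not_ge h⟩
      exact hj (K.le_max' j hjK)
    calc ∑ j ∈ (Finset.Iic k)ᶜ, a j ≤ ∑ j ∈ (Finset.Iic k)ᶜ, c j :=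
          Finset.sum_le_sum hbound
      _ ≤ ∑ j, c j := Finset.sum_le_sum_of_subset_of_nonneg (Finset.subset_univ _)
          (fun j _ _ => (hc0 j).le)
      _ ≤ θ / 2 := hsumc
  refine ⟨S, ?_, ?_, ?_⟩
  · -- cardinality bound
    set M : ℝ := ⨆ i, f i with hM
    have hbdd : BddAbove (Set.range f) := Set.Finite.bddAbove (Set.finite_range f)
    have hfM : ∀ i, f i ≤ M := fun i => le_ciSup hbdd i
    have hM0 : 0 < M := by
      have : ∃ i, 0 < f i := by
        by_contra h
        push_neg at h
        have : ∑ i, f i ≤ 0 := Finset.sum_nonpos (fun i _ => h i)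
        linarith
      obtain ⟨i, hi⟩ := this
      exact lt_of_lt_of_le hi (hfM i)
    have hpref : ∑ j ∈ Finset.Iic k, a j ≤ (S.card : ℝ) * M := by
      calc ∑ j ∈ Finset.Iic k, a j ≤ ∑ j ∈ Finset.Iic k, M :=
            Finset.sum_le_sum (fun j _ => hfM (e j))
        _ = ((Finset.Iic k).card : ℝ) * M := by rw [Finset.sum_const, nsmul_eq_mul]
        _ = (S.card : ℝ) * M := by rw [hcard, Fin.card_Iic]
    have htotal : ∑ i, f i ≤ (S.card : ℝ) * M + θ / 2 := by
      have := Finset.sum_add_sum_compl S f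
      rw [hSsum', hcompl] at this
      linarith
    have : (∑ i, f i) / 2 ≤ (S.card : ℝ) * M := by linarith
    rw [div_le_iff₀ (by positivity)]
    calc ∑ i, f i ≤ 2 * ((S.card : ℝ) * M) := by linarith
      _ = (S.card : ℝ) * (2 * M) := by ring
  · -- min bound
    have hSne : S.Nonempty := ⟨e k, Finset.mem_image_of_mem e (Finset.mem_Iic.mpr le_rfl)⟩
    have : Nonempty {x // x ∈ S} := hSne.to_subtype
    have hbound : ∀ i : S, θ / (2 * (S.card : ℝ) * (1 + Real.log n)) ≤ |v i.1| := by
      rintro ⟨i, hi⟩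
      rw [hS, Finset.mem_image] at hi
      obtain ⟨j, hj, rfl⟩ := hi
      rw [Finset.mem_Iic] at hj
      have h1 : a k ≤ a j := haanti hj
      have h2 : θ / (2 * (S.card : ℝ) * (1 + Real.log n)) = c k := by
        rw [hc, hcard]; push_cast; ring_nf
      calc θ / (2 * (S.card : ℝ) * (1 + Real.log n)) = c k := h2
        _ ≤ a k := hkc
        _ ≤ a j := h1
        _ = |v (e j)| := rfl
    exact le_ciInf hbound
  · -- complement sum bound
    rw [show (∑ i ∈ Sᶜ, |v i|) = ∑ i ∈ Sᶜ, f i from rfl, hcompl]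
    linarith
end

section
/- Let X ⊂ ℝ^m and Y ⊂ ℝ^n be nonempty finite sets, and let φ : X → ℝ and ψ : Y → ℝ. Then orth(φ ⊗ ψ) = orth(φ) + orth(ψ), where (φ⊗ψ)(x,y) = φ(x)ψ(y). -/
/-- Orthogonal content of `φ : X → ℝ` on a finite subset `X` of Euclidean space. -/
noncomputable def orth {σ : Type*} (X : Finset (σ → ℝ)) (φ : (σ → ℝ) → ℝ) : ℕ∞ :=
  ⨅ p ∈ {p : MvPolynomial σ ℝ | ∑ x ∈ X, φ x * MvPolynomial.eval x p ≠ 0},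
    (p.totalDegree : ℕ∞)

/-- The Cartesian product `X × Y`, viewed as a finite subset of `ℝ^{σ ⊕ τ}`. -/
noncomputable def prodSet {σ τ : Type*} (X : Finset (σ → ℝ)) (Y : Finset (τ → ℝ)) :
    Finset (σ ⊕ τ → ℝ) :=
  letI := Classical.decEq (σ ⊕ τ → ℝ)
  (X ×ˢ Y).image fun p => Sum.elim p.1 p.2

open MvPolynomial Finsupp

variable {σ τ : Type*}

-- support splitting of a finsupp on a sum type
lemma support_split [DecidableEq σ] [DecidableEq τ] (a : σ ⊕ τ →₀ ℕ) :
    a.support =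
      ((sumFinsuppEquivProdFinsupp a).1.support.map ⟨Sum.inl, Sum.inl_injective⟩) ∪
      ((sumFinsuppEquivProdFinsupp a).2.support.map ⟨Sum.inr, Sum.inr_injective⟩) := by
  ext i
  cases i with
  | inl i => simp [Finsupp.fst_sumFinsuppEquivProdFinsupp]
  | inr j => simp [Finsupp.snd_sumFinsuppEquivProdFinsupp]

lemma prod_split [DecidableEq σ] [DecidableEq τ] {N : Type*} [CommMonoid N] (a : σ ⊕ τ →₀ ℕ) (h : σ ⊕ τ → ℕ → N) :
    a.prod h = ((sumFinsuppEquivProdFinsupp a).1.prod fun i e => h (Sum.inl i) e) *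
      ((sumFinsuppEquivProdFinsupp a).2.prod fun j e => h (Sum.inr j) e) := by
  classical
  rw [Finsupp.prod, support_split a, Finset.prod_union, Finset.prod_map, Finset.prod_map]
  · simp [Finsupp.prod, Finsupp.fst_sumFinsuppEquivProdFinsupp,
      Finsupp.snd_sumFinsuppEquivProdFinsupp]
  · simp [Finset.disjoint_left]

lemma sum_split [DecidableEq σ] [DecidableEq τ] (a : σ ⊕ τ →₀ ℕ) :
    (a.sum fun _ e => e) = ((sumFinsuppEquivProdFinsupp a).1.sum fun _ e => e) +
      ((sumFinsuppEquivProdFinsupp a).2.sum fun _ e => e) := by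
  classical
  rw [Finsupp.sum, support_split a, Finset.sum_union, Finset.sum_map, Finset.sum_map]
  · simp [Finsupp.sum, Finsupp.fst_sumFinsuppEquivProdFinsupp,
      Finsupp.snd_sumFinsuppEquivProdFinsupp]
  · simp [Finset.disjoint_left]

lemma triple_swap {α β γ : Type*} (A : Finset α) (B : Finset β) (C : Finset γ)
    (f : α → β → γ → ℝ) :
    ∑ x ∈ A, ∑ y ∈ B, ∑ a ∈ C, f x y a = ∑ a ∈ C, ∑ x ∈ A, ∑ y ∈ B, f x y a := by
  have h : ∀ x, ∑ y ∈ B, ∑ a ∈ C, f x y a = ∑ a ∈ C, ∑ y ∈ B, f x y a :=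
    fun x => Finset.sum_comm
  simp only [h]
  exact Finset.sum_comm

lemma pairing_eq [DecidableEq σ] [DecidableEq τ] (X : Finset (σ → ℝ)) (Y : Finset (τ → ℝ))
    (φ : (σ → ℝ) → ℝ) (ψ : (τ → ℝ) → ℝ) (r : MvPolynomial (σ ⊕ τ) ℝ) :
    ∑ x ∈ X, ∑ y ∈ Y, φ x * ψ y * MvPolynomial.eval (Sum.elim x y) r
      = ∑ a ∈ r.support, MvPolynomial.coeff a r *
        ((∑ x ∈ X, φ x * MvPolynomial.eval x
            (monomial (sumFinsuppEquivProdFinsupp a).1 (1 : ℝ))) *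
         (∑ y ∈ Y, ψ y * MvPolynomial.eval y
            (monomial (sumFinsuppEquivProdFinsupp a).2 (1 : ℝ)))) := by
  have h1 : ∀ (x : σ → ℝ) (y : τ → ℝ), MvPolynomial.eval (Sum.elim x y) r =
      ∑ a ∈ r.support, MvPolynomial.coeff a r *
        (((sumFinsuppEquivProdFinsupp a).1.prod fun i e => x i ^ e) *
         ((sumFinsuppEquivProdFinsupp a).2.prod fun j e => y j ^ e)) := by
    intro x y
    rw [eval_eq]
    refine Finset.sum_congr rfl fun a _ => ?_
    rw [show (∏ i ∈ a.support, Sum.elim x y i ^ a i)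
        = a.prod (fun i e => Sum.elim x y i ^ e) from rfl, prod_split]
    simp
  simp only [h1, Finset.mul_sum, eval_monomial, one_mul, Finset.sum_mul_sum]
  refine (triple_swap X Y r.support _).trans ?_
  refine Finset.sum_congr rfl fun a _ => ?_
  rw [Finset.sum_comm]
  refine Finset.sum_congr rfl fun y _ => ?_
  rw [Finset.sum_mul, Finset.mul_sum]
  exact Finset.sum_congr rfl fun x _ => by ring

lemma orth_le {σ : Type*} (X : Finset (σ → ℝ)) (φ : (σ → ℝ) → ℝ) {p : MvPolynomial σ ℝ}
    (h : ∑ x ∈ X, φ x * MvPolynomial.eval x p ≠ 0) :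
    orth X φ ≤ (p.totalDegree : ℕ∞) :=
  iInf₂_le p h

lemma sum_prodSet {σ τ : Type*} (X : Finset (σ → ℝ)) (Y : Finset (τ → ℝ))
    (F : (σ ⊕ τ → ℝ) → ℝ) :
    ∑ z ∈ prodSet X Y, F z = ∑ x ∈ X, ∑ y ∈ Y, F (Sum.elim x y) := by
  classical
  unfold prodSet
  rw [Finset.sum_image, Finset.sum_product]
  rintro ⟨x, y⟩ hxy ⟨x', y'⟩ hxy' h
  have hx : x = x' := funext fun i => congrFun h (Sum.inl i)
  have hy : y = y' := funext fun j => congrFun h (Sum.inr j)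
  simp [hx, hy]

/-- For nonempty finite `X ⊂ ℝ^m`, `Y ⊂ ℝ^n` and `φ : X → ℝ`, `ψ : Y → ℝ`,
`orth(φ ⊗ ψ) = orth(φ) + orth(ψ)`. -/
theorem stmt_6 {m n : ℕ} (X : Finset (Fin m → ℝ)) (Y : Finset (Fin n → ℝ))
    (hX : X.Nonempty) (hY : Y.Nonempty) (φ : (Fin m → ℝ) → ℝ) (ψ : (Fin n → ℝ) → ℝ) :
    orth (prodSet X Y) (fun z => φ (z ∘ Sum.inl) * ψ (z ∘ Sum.inr)) =
      orth X φ + orth Y ψ := by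
  classical
  refine le_antisymm ?_ ?_
  · -- ≤
    by_cases h1 : orth X φ = ⊤
    · simp [h1]
    by_cases h2 : orth Y ψ = ⊤
    · simp [h2]
    obtain ⟨n₁, hn₁⟩ := WithTop.ne_top_iff_exists.mp h1
    obtain ⟨n₂, hn₂⟩ := WithTop.ne_top_iff_exists.mp h2
    have hp : orth X φ < ((n₁ + 1 : ℕ) : ℕ∞) := by
      rw [← hn₁]; exact Nat.cast_lt.mpr (Nat.lt_succ_self n₁)
    have hq : orth Y ψ < ((n₂ + 1 : ℕ) : ℕ∞) := by
      rw [← hn₂]; exact Nat.cast_lt.mpr (Nat.lt_succ_self n₂)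
    simp only [orth, iInf_lt_iff] at hp hq
    obtain ⟨p, hpS, hpd⟩ := hp
    obtain ⟨q, hqS, hqd⟩ := hq
    have hpd' : p.totalDegree ≤ n₁ := Nat.lt_succ_iff.mp (by exact_mod_cast hpd)
    have hqd' : q.totalDegree ≤ n₂ := Nat.lt_succ_iff.mp (by exact_mod_cast hqd)
    set r : MvPolynomial (Fin m ⊕ Fin n) ℝ :=
      MvPolynomial.rename Sum.inl p * MvPolynomial.rename Sum.inr q with hr
    have hpair : ∑ z ∈ prodSet X Y,
        (φ (z ∘ Sum.inl) * ψ (z ∘ Sum.inr)) * MvPolynomial.eval z r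
        = (∑ x ∈ X, φ x * MvPolynomial.eval x p) * (∑ y ∈ Y, ψ y * MvPolynomial.eval y q) := by
      rw [sum_prodSet, Finset.sum_mul_sum]
      refine Finset.sum_congr rfl fun x _ => Finset.sum_congr rfl fun y _ => ?_
      simp only [hr, map_mul, MvPolynomial.eval_rename, Sum.elim_comp_inl, Sum.elim_comp_inr]
      ring
    have hne : ∑ z ∈ prodSet X Y,
        (φ (z ∘ Sum.inl) * ψ (z ∘ Sum.inr)) * MvPolynomial.eval z r ≠ 0 := by
      rw [hpair]; exact mul_ne_zero hpS hqS
    calc orth (prodSet X Y) (fun z => φ (z ∘ Sum.inl) * ψ (z ∘ Sum.inr))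
        ≤ (r.totalDegree : ℕ∞) := orth_le _ _ hne
      _ ≤ ((n₁ + n₂ : ℕ) : ℕ∞) := by
          have : r.totalDegree ≤ n₁ + n₂ := by
            refine le_trans (MvPolynomial.totalDegree_mul _ _) (add_le_add ?_ ?_)
            · exact le_trans (MvPolynomial.totalDegree_rename_le _ _) hpd'
            · exact le_trans (MvPolynomial.totalDegree_rename_le _ _) hqd'
          exact_mod_cast this
      _ = orth X φ + orth Y ψ := by rw [← hn₁, ← hn₂]; push_cast; rfl
  · -- ≥
    refine le_iInf₂ fun r hr => ?_
    have hr' : ∑ x ∈ X, ∑ y ∈ Y, φ x * ψ y * MvPolynomial.eval (Sum.elim x y) r ≠ 0 := by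
      have hr2 : ∑ z ∈ prodSet X Y,
          (φ (z ∘ Sum.inl) * ψ (z ∘ Sum.inr)) * MvPolynomial.eval z r ≠ 0 := hr
      rw [sum_prodSet] at hr2
      simpa using hr2
    rw [pairing_eq] at hr'
    obtain ⟨a, haS, ha⟩ := Finset.exists_ne_zero_of_sum_ne_zero hr'
    rw [mul_ne_zero_iff, mul_ne_zero_iff] at ha
    obtain ⟨hc, hA, hB⟩ := ha
    have hφ : orth X φ ≤
        ((MvPolynomial.monomial (Finsupp.sumFinsuppEquivProdFinsupp a).1 (1:ℝ)).totalDegree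
          : ℕ∞) := orth_le _ _ hA
    have hψ : orth Y ψ ≤
        ((MvPolynomial.monomial (Finsupp.sumFinsuppEquivProdFinsupp a).2 (1:ℝ)).totalDegree
          : ℕ∞) := orth_le _ _ hB
    have hdeg : ((Finsupp.sumFinsuppEquivProdFinsupp a).1.sum fun _ e => e) +
        ((Finsupp.sumFinsuppEquivProdFinsupp a).2.sum fun _ e => e) ≤ r.totalDegree := by
      rw [← sum_split a]
      exact MvPolynomial.le_totalDegree haS
    calc orth X φ + orth Y ψ
        ≤ (((Finsupp.sumFinsuppEquivProdFinsupp a).1.sum fun _ e => e : ℕ) : ℕ∞) +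
          (((Finsupp.sumFinsuppEquivProdFinsupp a).2.sum fun _ e => e : ℕ) : ℕ∞) := by
          refine add_le_add (le_trans hφ ?_) (le_trans hψ ?_)
          · rw [MvPolynomial.totalDegree_monomial _ (one_ne_zero)]
          · rw [MvPolynomial.totalDegree_monomial _ (one_ne_zero)]
      _ ≤ (r.totalDegree : ℕ∞) := by exact_mod_cast hdeg
end

section
/- Let X be a nonempty finite subset of Euclidean space, φ, ψ : X → ℝ, and n ≥ 1 an integer. Then orth(φ^{⊗n} − ψ^{⊗n}) ≥ orth(φ − ψ), where f^{⊗n} denotes the n-fold tensor power on X^n. -/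
/-- The `n`-fold Cartesian power `X^n`, viewed as a finite subset of `ℝ^{Fin n × σ}`. -/
noncomputable def powSet {σ : Type*} (n : ℕ) (X : Finset (σ → ℝ)) :
    Finset (Fin n × σ → ℝ) :=
  letI := Classical.decEq (Fin n × σ → ℝ)
  (Fintype.piFinset fun _ : Fin n => X).image fun g p => g p.1 p.2

/-- The `n`-fold tensor power `φ^{⊗n}(x₁,...,xₙ) = ∏ᵢ φ(xᵢ)`. -/
noncomputable def tensorPow {σ : Type*} (n : ℕ) (φ : (σ → ℝ) → ℝ) :
    (Fin n × σ → ℝ) → ℝ :=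
  fun x => ∏ i, φ fun s => x (i, s)

/-!
Expanding a polynomial `p` on `X^n` into monomials, each monomial splits into a product of
monomials `mᵢ` in the `i`-th block of variables, each of degree at most `deg p`, so the pairing of
`χ^{⊗n}` with it is `∏ᵢ ⟨χ, mᵢ⟩`. If `deg p < orth(φ - ψ)` then `⟨φ, mᵢ⟩ = ⟨ψ, mᵢ⟩` for every
block, so the pairings of `φ^{⊗n}` and `ψ^{⊗n}` with every monomial of `p`, hence with `p`, agree.
-/

open MvPolynomial Finset

section Orth

variable {σ : Type*} {X : Finset (σ → ℝ)} {χ : (σ → ℝ) → ℝ}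

lemma orth_le_totalDegree {p : MvPolynomial σ ℝ} (hp : ∑ x ∈ X, χ x * eval x p ≠ 0) :
    orth X χ ≤ p.totalDegree :=
  iInf₂_le p hp

lemma sum_mul_eval_eq_zero_of_totalDegree_lt_orth {p : MvPolynomial σ ℝ}
    (hp : (p.totalDegree : ℕ∞) < orth X χ) : ∑ x ∈ X, χ x * eval x p = 0 := by
  by_contra h
  exact (orth_le_totalDegree h).not_gt hp

lemma sum_mul_eval_eq_of_totalDegree_lt_orth_sub {φ ψ : (σ → ℝ) → ℝ} {p : MvPolynomial σ ℝ}
    (hp : (p.totalDegree : ℕ∞) < orth X fun x => φ x - ψ x) :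
    ∑ x ∈ X, φ x * eval x p = ∑ x ∈ X, ψ x * eval x p := by
  have h := sum_mul_eval_eq_zero_of_totalDegree_lt_orth hp
  rwa [sum_congr rfl fun x _ => sub_mul _ _ _, sum_sub_distrib, sub_eq_zero] at h

end Orth

section TensorPower

variable {σ : Type*} {n : ℕ}

lemma sum_powSet (X : Finset (σ → ℝ)) (F : (Fin n × σ → ℝ) → ℝ) :
    ∑ x ∈ powSet n X, F x =
      ∑ g ∈ Fintype.piFinset (fun _ : Fin n => X), F fun q => g q.1 q.2 := by
  classical
  rw [powSet, Finset.sum_image]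
  exact fun g _ h _ hgh => funext fun i => funext fun s => congrFun hgh (i, s)

noncomputable def blockMonomial [Fintype σ] (μ : Fin n × σ →₀ ℕ) (i : Fin n) :
    MvPolynomial σ ℝ :=
  ∏ s, X s ^ μ (i, s)

lemma totalDegree_blockMonomial_le [Fintype σ] (μ : Fin n × σ →₀ ℕ) (i : Fin n) :
    (blockMonomial μ i).totalDegree ≤ μ.sum fun _ e => e := by
  calc (blockMonomial μ i).totalDegree
      ≤ ∑ s, (X (R := ℝ) s ^ μ (i, s)).totalDegree := totalDegree_finsetProd _ _
    _ = ∑ s, μ (i, s) := by simp only [totalDegree_X_pow]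
    _ ≤ ∑ j, ∑ s, μ (j, s) :=
        single_le_sum (f := fun j => ∑ s, μ (j, s)) (fun _ _ => Nat.zero_le _) (mem_univ i)
    _ = μ.sum fun _ e => e := by
        rw [Finsupp.sum_fintype _ _ fun _ => rfl, Fintype.sum_prod_type]

lemma sum_powSet_tensorPow_mul_eval [Fintype σ] (X : Finset (σ → ℝ)) (χ : (σ → ℝ) → ℝ)
    (p : MvPolynomial (Fin n × σ) ℝ) :
    ∑ x ∈ powSet n X, tensorPow n χ x * eval x p =
      ∑ μ ∈ p.support, coeff μ p * ∏ i, ∑ y ∈ X, χ y * eval y (blockMonomial μ i) := by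
  rw [sum_powSet, sum_congr rfl fun g _ => by rw [eval_eq', mul_sum], sum_comm]
  refine sum_congr rfl fun μ _ => ?_
  rw [prod_univ_sum, mul_sum]
  refine sum_congr rfl fun g _ => ?_
  simp only [tensorPow, blockMonomial, map_prod, map_pow, eval_X, Fintype.prod_prod_type,
    prod_mul_distrib]
  ring

end TensorPower

theorem stmt_7_general {m : ℕ} (n : ℕ) (X : Finset (Fin m → ℝ))
    (φ ψ : (Fin m → ℝ) → ℝ) :
    orth X (fun x => φ x - ψ x) ≤
      orth (powSet n X) (fun x => tensorPow n φ x - tensorPow n ψ x) := by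
  refine le_iInf₂ fun p hp => ?_
  by_contra! hlt
  have block_eq : ∀ μ ∈ p.support, ∀ i,
      ∑ y ∈ X, φ y * eval y (blockMonomial μ i) = ∑ y ∈ X, ψ y * eval y (blockMonomial μ i) := by
    intro μ hμ i
    have hdeg : (blockMonomial μ i).totalDegree ≤ p.totalDegree :=
      (totalDegree_blockMonomial_le μ i).trans (le_totalDegree hμ)
    exact sum_mul_eval_eq_of_totalDegree_lt_orth_sub ((Nat.cast_le.mpr hdeg).trans_lt hlt)
  refine hp ?_
  simp only [sub_mul, sum_sub_distrib, sum_powSet_tensorPow_mul_eval, sub_eq_zero]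
  exact sum_congr rfl fun μ hμ => by rw [prod_congr rfl fun i _ => block_eq μ hμ i]

/-- `orth(φ^{⊗n} − ψ^{⊗n}) ≥ orth(φ − ψ)` for functions on a nonempty finite
subset `X` of Euclidean space and `n ≥ 1`. -/
theorem stmt_7 {m : ℕ} (n : ℕ) (hn : 1 ≤ n) (X : Finset (Fin m → ℝ)) (hX : X.Nonempty)
    (φ ψ : (Fin m → ℝ) → ℝ) :
    orth X (fun x => φ x - ψ x) ≤
      orth (powSet n X) (fun x => tensorPow n φ x - tensorPow n ψ x) :=
  stmt_7_general n X φ ψ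
end

section
/- Let φ₀, φ₁ : X → ℝ be functions on a finite subset X of Euclidean space with orth(φ₁ − φ₀) > 0. Then for every polynomial p : X^n → ℝ, the mapping z ↦ ⟨⊗_{i=1}^{n} φ_{z_i}, p⟩ is a polynomial on {0,1}^n of degree at most (deg p)/orth(φ₁ − φ₀). -/
set_option maxRecDepth 8000 in
set_option maxHeartbeats 1000000 in
/-- If `orth(φ₁ − φ₀) > 0`, then for every polynomial `p` on `X^n`, the map
`z ↦ ⟨⊗ᵢ φ_{zᵢ}, p⟩` is a polynomial on `{0,1}^n` of degree at most
`(deg p)/orth(φ₁ − φ₀)` (stated multiplicatively: `deg q · orth(φ₁ − φ₀) ≤ deg p`). -/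
theorem stmt_8 {m : ℕ} (X : Finset (Fin m → ℝ)) (φ₀ φ₁ : (Fin m → ℝ) → ℝ)
    (h : 0 < orth X fun x => φ₁ x - φ₀ x) (n : ℕ)
    (p : MvPolynomial (Fin n × Fin m) ℝ) :
    ∃ q : MvPolynomial (Fin n) ℝ,
      (q.totalDegree : ℕ∞) * orth X (fun x => φ₁ x - φ₀ x) ≤ (p.totalDegree : ℕ∞) ∧
      ∀ z : Fin n → Bool,
        ∑ x ∈ powSet n X,
            (∏ i, (if z i then φ₁ else φ₀) fun s => x (i, s)) * MvPolynomial.eval x p =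
          MvPolynomial.eval (fun i => if z i then (1 : ℝ) else 0) q := by
  classical
  set ψ : (Fin m → ℝ) → ℝ := fun x => φ₁ x - φ₀ x with hψ
  set D := orth X ψ with hDdef
  set A : ((Fin n × Fin m) →₀ ℕ) → Fin n → ℝ :=
    fun d i => ∑ x ∈ X, φ₀ x * ∏ s, x s ^ d (i, s) with hA
  set B : ((Fin n × Fin m) →₀ ℕ) → Fin n → ℝ :=
    fun d i => ∑ x ∈ X, ψ x * ∏ s, x s ^ d (i, s) with hB
  set F : ((Fin n × Fin m) →₀ ℕ) → MvPolynomial (Fin n) ℝ :=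
    fun d => ∏ i, (MvPolynomial.C (A d i) + MvPolynomial.C (B d i) * MvPolynomial.X i)
    with hF
  refine ⟨∑ d ∈ p.support, MvPolynomial.C (p.coeff d) * F d, ?_, ?_⟩
  · -- degree bound
    have key : ∀ d ∈ p.support, ((F d).totalDegree : ℕ∞) * D ≤ (p.totalDegree : ℕ∞) := by
      intro d hd
      set T : Finset (Fin n) := Finset.univ.filter (fun i => B d i ≠ 0) with hT
      have hdegF : (F d).totalDegree ≤ T.card := by
        refine le_trans (MvPolynomial.totalDegree_finset_prod _ _) ?_
        have h0 : ∀ i ∈ Finset.univ, i ∉ T →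
            (MvPolynomial.C (A d i) + MvPolynomial.C (B d i) * MvPolynomial.X i).totalDegree
              = 0 := by
          intro i _ hi
          have hb : B d i = 0 := by
            by_contra hb
            exact hi (Finset.mem_filter.mpr ⟨Finset.mem_univ i, hb⟩)
          rw [hb]
          simp [MvPolynomial.totalDegree_C]
        have h1 : ∀ i ∈ T,
            (MvPolynomial.C (A d i) + MvPolynomial.C (B d i) * MvPolynomial.X i).totalDegree
              ≤ 1 := by
          intro i _
          refine le_trans (MvPolynomial.totalDegree_add _ _) ?_
          simp only [MvPolynomial.totalDegree_C, max_le_iff]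
          refine ⟨Nat.zero_le 1, le_trans (MvPolynomial.totalDegree_mul _ _) ?_⟩
          simp [MvPolynomial.totalDegree_C, MvPolynomial.totalDegree_X]
        rw [← Finset.sum_subset (Finset.subset_univ T) h0]
        calc ∑ i ∈ T,
              (MvPolynomial.C (A d i) + MvPolynomial.C (B d i) * MvPolynomial.X i).totalDegree
            ≤ ∑ _i ∈ T, 1 := by exact Finset.sum_le_sum h1
          _ = T.card := by simp
      have hDle : ∀ i ∈ T, D ≤ ((∑ s, d (i, s) : ℕ) : ℕ∞) := by
        intro i hi
        have hb : B d i ≠ 0 := (Finset.mem_filter.mp hi).2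
        have hmem : (∏ s, MvPolynomial.X s ^ d (i, s) : MvPolynomial (Fin m) ℝ) ∈
            {r : MvPolynomial (Fin m) ℝ | ∑ x ∈ X, ψ x * MvPolynomial.eval x r ≠ 0} := by
          simpa [hB] using hb
        have h1 : D ≤ ((∏ s, MvPolynomial.X s ^ d (i, s) :
            MvPolynomial (Fin m) ℝ).totalDegree : ℕ∞) := by
          rw [hDdef, orth]
          exact iInf₂_le _ hmem
        refine le_trans h1 ?_
        have h2 : (∏ s, MvPolynomial.X s ^ d (i, s) :
            MvPolynomial (Fin m) ℝ).totalDegree ≤ ∑ s, d (i, s) := by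
          refine le_trans (MvPolynomial.totalDegree_finset_prod _ _) ?_
          simp [MvPolynomial.totalDegree_X_pow]
        exact_mod_cast h2
      calc ((F d).totalDegree : ℕ∞) * D ≤ (T.card : ℕ∞) * D := by
            exact mul_le_mul_left (by exact_mod_cast hdegF) D
        _ = ∑ _i ∈ T, D := by rw [Finset.sum_const, nsmul_eq_mul]
        _ ≤ ∑ i ∈ T, ((∑ s, d (i, s) : ℕ) : ℕ∞) := Finset.sum_le_sum hDle
        _ ≤ ∑ i : Fin n, ((∑ s, d (i, s) : ℕ) : ℕ∞) := by
            exact Finset.sum_le_sum_of_subset (Finset.subset_univ T)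
        _ = ((∑ i : Fin n, ∑ s, d (i, s) : ℕ) : ℕ∞) := by push_cast; rfl
        _ ≤ (p.totalDegree : ℕ∞) := by
            have : ∑ i : Fin n, ∑ s, d (i, s) = ∑ a : Fin n × Fin m, d a :=
              (Fintype.sum_prod_type _).symm
            rw [this]
            have hle : ∑ a : Fin n × Fin m, d a ≤ p.totalDegree := by
              have : (d.sum fun _ e => e) = ∑ a : Fin n × Fin m, d a := by
                rw [Finsupp.sum_fintype]; intro; rfl
              rw [← this]
              exact MvPolynomial.le_totalDegree hd
            exact_mod_cast hle
    rcases p.support.eq_empty_or_nonempty with hs | hs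
    · simp [hs]
    · have hq : (∑ d ∈ p.support, MvPolynomial.C (p.coeff d) * F d).totalDegree ≤
          p.support.sup fun d => (MvPolynomial.C (p.coeff d) * F d).totalDegree :=
        MvPolynomial.totalDegree_finset_sum _ _
      obtain ⟨d₀, hd₀, hsup⟩ := p.support.exists_mem_eq_sup hs
        fun d => (MvPolynomial.C (p.coeff d) * F d).totalDegree
      have h1 : (∑ d ∈ p.support, MvPolynomial.C (p.coeff d) * F d).totalDegree ≤
          (F d₀).totalDegree := by
        refine le_trans hq ?_
        rw [hsup]
        refine le_trans (MvPolynomial.totalDegree_mul _ _) ?_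
        simp [MvPolynomial.totalDegree_C]
      calc ((∑ d ∈ p.support, MvPolynomial.C (p.coeff d) * F d).totalDegree : ℕ∞) * D
          ≤ ((F d₀).totalDegree : ℕ∞) * D := mul_le_mul_left (by exact_mod_cast h1) D
        _ ≤ (p.totalDegree : ℕ∞) := key d₀ hd₀
  · -- evaluation
    intro z
    have himg : ∑ x ∈ powSet n X,
        (∏ i, (if z i then φ₁ else φ₀) fun s => x (i, s)) * MvPolynomial.eval x p =
        ∑ g ∈ Fintype.piFinset (fun _ : Fin n => X),
          (∏ i, (if z i then φ₁ else φ₀) (g i)) *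
            MvPolynomial.eval (fun pr : Fin n × Fin m => g pr.1 pr.2) p := by
      letI : DecidableEq (Fin n × Fin m → ℝ) := Classical.decEq _
      rw [powSet]
      refine Finset.sum_image ?_
      intro g _ g' _ hgg'
      funext i s
      exact congrFun hgg' (i, s)
    rw [himg]
    have expand : ∀ g : Fin n → Fin m → ℝ,
        MvPolynomial.eval (fun pr : Fin n × Fin m => g pr.1 pr.2) p
          = ∑ d ∈ p.support, p.coeff d * ∏ i, ∏ s, g i s ^ d (i, s) := by
      intro g
      rw [MvPolynomial.eval_eq']
      exact Finset.sum_congr rfl fun d _ => by rw [Fintype.prod_prod_type]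
    calc ∑ g ∈ Fintype.piFinset (fun _ : Fin n => X),
          (∏ i, (if z i then φ₁ else φ₀) (g i)) *
            MvPolynomial.eval (fun pr : Fin n × Fin m => g pr.1 pr.2) p
        = ∑ d ∈ p.support, p.coeff d *
            ∑ g ∈ Fintype.piFinset (fun _ : Fin n => X),
              ∏ i, ((if z i then φ₁ else φ₀) (g i) * ∏ s, g i s ^ d (i, s)) := by
          simp_rw [expand, Finset.mul_sum]
          rw [Finset.sum_comm]
          refine Finset.sum_congr rfl fun d _ => ?_
          refine Finset.sum_congr rfl fun g _ => ?_
          rw [Finset.prod_mul_distrib]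
          ring
      _ = ∑ d ∈ p.support, p.coeff d *
            ∏ i, ∑ x ∈ X, (if z i then φ₁ else φ₀) x * ∏ s, x s ^ d (i, s) := by
          refine Finset.sum_congr rfl fun d _ => ?_
          rw [Finset.prod_univ_sum]
      _ = MvPolynomial.eval (fun i => if z i then (1 : ℝ) else 0)
            (∑ d ∈ p.support, MvPolynomial.C (p.coeff d) * F d) := by
          rw [map_sum]
          refine Finset.sum_congr rfl fun d _ => ?_
          rw [map_mul, MvPolynomial.eval_C, hF]
          simp only [map_prod, map_add, map_mul, MvPolynomial.eval_C, MvPolynomial.eval_X]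
          congr 1
          refine Finset.prod_congr rfl fun i _ => ?_
          by_cases hz : z i
          · simp only [hz, if_true, mul_one, hA, hB]
            rw [← Finset.sum_add_distrib]
            refine Finset.sum_congr rfl fun x _ => ?_
            simp only [hψ]; ring
          · simp [hz, hA]
end

section
/- Let p : (ℝ^m)^n → ℝ be a polynomial of degree d. Then there is a polynomial p* : ℝ^m → ℝ of degree at most d such that for all x₁,...,xₙ ∈ {e₁,...,e_m, 0^m}, the average of p(x_{σ(1)},...,x_{σ(n)}) over all permutations σ ∈ S_n equals p*(x₁ + x₂ + ... + xₙ). -/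
open Finset

attribute [local instance] Classical.propDecidable

namespace Stmt11

variable {n m : ℕ}

/-- the set of indices whose vector equals `e_j` -/
noncomputable def A (x : Fin n → Fin m → ℝ) (j : Fin m) : Finset (Fin n) :=
  univ.filter fun i => x i = Pi.single j 1

lemma xval {x : Fin n → Fin m → ℝ}
    (hx : ∀ i, x i = 0 ∨ ∃ j, x i = Pi.single j 1) (i : Fin n) (j : Fin m) :
    x i j = if x i = Pi.single j 1 then 1 else 0 := by
  rcases hx i with h | ⟨j', h⟩
  · rw [h, if_neg]
    · rfl
    · intro hc
      have := congrFun hc j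
      simp at this
  · rw [h]
    by_cases hjj : j' = j
    · subst hjj; simp
    · rw [if_neg]
      · exact Pi.single_eq_of_ne (Ne.symm hjj) 1
      · intro hc
        have := congrFun hc j
        rw [Pi.single_eq_of_ne (Ne.symm hjj) 1, Pi.single_eq_same] at this
        exact one_ne_zero this.symm

lemma A_disj {x : Fin n → Fin m → ℝ} {j j' : Fin m} {i : Fin n}
    (h : i ∈ A x j) (h' : i ∈ A x j') : j = j' := by
  simp only [A, mem_filter] at h h'
  by_contra hne
  have := congrFun (h.2.symm.trans h'.2) j
  rw [Pi.single_eq_same, Pi.single_eq_of_ne hne] at this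
  exact one_ne_zero this

/-- permutations agreeing with `σ₀` on `S` number `(n - |S|)!` -/
lemma card_agree (S : Finset (Fin n)) (σ₀ : Equiv.Perm (Fin n)) :
    (univ.filter fun σ : Equiv.Perm (Fin n) => ∀ i ∈ S, σ i = σ₀ i).card
      = (n - S.card).factorial := by
  have step1 : (univ.filter fun σ : Equiv.Perm (Fin n) => ∀ i ∈ S, σ i = σ₀ i).card
      = (univ.filter fun τ : Equiv.Perm (Fin n) => ∀ i ∈ S, τ i = i).card := by
    apply Finset.card_bij (fun σ _ => σ₀⁻¹ * σ)
    · intro σ hσ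
      simp only [mem_filter, mem_univ, true_and] at hσ ⊢
      intro i hi
      simp [Equiv.Perm.mul_apply, hσ i hi]
    · intro σ₁ h₁ σ₂ h₂ h
      exact mul_left_cancel h
    · intro τ hτ
      refine ⟨σ₀ * τ, ?_, by group⟩
      simp only [mem_filter, mem_univ, true_and] at hτ ⊢
      intro i hi
      simp [Equiv.Perm.mul_apply, hτ i hi]
  rw [step1]
  have hiff : ∀ (τ : Equiv.Perm (Fin n)), (∀ i ∈ S, τ i = i) → ∀ i : Fin n, i ∉ S ↔ τ i ∉ S := by
    intro τ hτ i
    constructor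
    · intro hi hc
      have h1 : τ (τ i) = τ i := hτ _ hc
      exact hi (by rwa [← τ.injective h1])
    · intro hi hc
      exact hi (by rw [hτ i hc]; exact hc)
  have e : {τ : Equiv.Perm (Fin n) // ∀ i ∈ S, τ i = i} ≃ Equiv.Perm {i : Fin n // i ∉ S} := by
    refine Equiv.trans (Equiv.subtypeEquivRight ?_) (Equiv.Perm.subtypeEquivSubtypePerm (fun i => i ∉ S)).symm
    intro f
    constructor
    · intro h a ha
      exact h a (by simpa using ha)
    · intro h a ha
      exact h a (by simpa using ha)
  have h1 : (univ.filter fun τ : Equiv.Perm (Fin n) => ∀ i ∈ S, τ i = i).card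
      = Fintype.card {τ : Equiv.Perm (Fin n) // ∀ i ∈ S, τ i = i} :=
    (Fintype.card_subtype _).symm
  rw [h1, Fintype.card_congr e, Fintype.card_perm]
  congr 1
  rw [Fintype.card_subtype_compl, Fintype.card_fin]
  congr 1
  simp [Fintype.card_subtype]

/-- number of constrained partial injections -/
lemma card_In (x : Fin n → Fin m → ℝ) (jf : Fin n → Fin m) (S : Finset (Fin n)) :
    (univ.filter fun f : Fin n → Option (Fin n) =>
        (∀ i, i ∉ S → f i = none) ∧ (∀ i ∈ S, ∃ t ∈ A x (jf i), f i = some t) ∧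
        ∀ i ∈ S, ∀ i' ∈ S, i ≠ i' → f i ≠ f i').card
    = ∏ j, ((A x j).card).descFactorial ((S.filter fun i => jf i = j).card) := by
  induction S using Finset.induction_on with
  | empty =>
    have : (univ.filter fun f : Fin n → Option (Fin n) =>
        (∀ i, i ∉ (∅ : Finset (Fin n)) → f i = none) ∧
        (∀ i ∈ (∅ : Finset (Fin n)), ∃ t ∈ A x (jf i), f i = some t) ∧
        ∀ i ∈ (∅ : Finset (Fin n)), ∀ i' ∈ (∅ : Finset (Fin n)), i ≠ i' → f i ≠ f i')
        = {fun _ => none} := by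
      ext f
      simp [funext_iff]
    rw [this]
    simp
  | @insert i₀ S' hi₀ ih =>
    have hgnone : ∀ f ∈ univ.filter fun f : Fin n → Option (Fin n) =>
        (∀ i, i ∉ insert i₀ S' → f i = none) ∧
        (∀ i ∈ insert i₀ S', ∃ t ∈ A x (jf i), f i = some t) ∧
        ∀ i ∈ insert i₀ S', ∀ i' ∈ insert i₀ S', i ≠ i' → f i ≠ f i',
        Function.update f i₀ none ∈ univ.filter fun g : Fin n → Option (Fin n) =>
        (∀ i, i ∉ S' → g i = none) ∧ (∀ i ∈ S', ∃ t ∈ A x (jf i), g i = some t) ∧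
        ∀ i ∈ S', ∀ i' ∈ S', i ≠ i' → g i ≠ g i' := by
      intro f hf
      simp only [mem_filter, mem_univ, true_and] at hf ⊢
      obtain ⟨h1, h2, h3⟩ := hf
      refine ⟨?_, ?_, ?_⟩
      · intro i hi
        by_cases hii : i = i₀
        · subst hii; simp
        · rw [Function.update_of_ne hii]
          exact h1 i (by simp [hii, hi])
      · intro i hi
        have hii : i ≠ i₀ := fun hc => hi₀ (hc ▸ hi)
        rw [Function.update_of_ne hii]
        exact h2 i (mem_insert_of_mem hi)
      · intro i hi i' hi' hne
        have hii : i ≠ i₀ := fun hc => hi₀ (hc ▸ hi)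
        have hii' : i' ≠ i₀ := fun hc => hi₀ (hc ▸ hi')
        rw [Function.update_of_ne hii, Function.update_of_ne hii']
        exact h3 i (mem_insert_of_mem hi) i' (mem_insert_of_mem hi') hne
    rw [Finset.card_eq_sum_card_fiberwise hgnone]
    have hfiber : ∀ g ∈ univ.filter fun g : Fin n → Option (Fin n) =>
        (∀ i, i ∉ S' → g i = none) ∧ (∀ i ∈ S', ∃ t ∈ A x (jf i), g i = some t) ∧
        ∀ i ∈ S', ∀ i' ∈ S', i ≠ i' → g i ≠ g i',
        ((univ.filter fun f : Fin n → Option (Fin n) =>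
          (∀ i, i ∉ insert i₀ S' → f i = none) ∧
          (∀ i ∈ insert i₀ S', ∃ t ∈ A x (jf i), f i = some t) ∧
          ∀ i ∈ insert i₀ S', ∀ i' ∈ insert i₀ S', i ≠ i' → f i ≠ f i').filter
            fun f => Function.update f i₀ none = g).card
        = (A x (jf i₀)).card - ((S'.filter fun i => jf i = jf i₀)).card := by
      intro g hg
      simp only [mem_filter, mem_univ, true_and] at hg
      obtain ⟨hg1, hg2, hg3⟩ := hg
      -- the fiber is in bijection with the available targets
      have hbij : ((univ.filter fun f : Fin n → Option (Fin n) =>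
          (∀ i, i ∉ insert i₀ S' → f i = none) ∧
          (∀ i ∈ insert i₀ S', ∃ t ∈ A x (jf i), f i = some t) ∧
          ∀ i ∈ insert i₀ S', ∀ i' ∈ insert i₀ S', i ≠ i' → f i ≠ f i').filter
            fun f => Function.update f i₀ none = g).card
          = ((A x (jf i₀)) \ (univ.filter fun t => ∃ i ∈ S', g i = some t)).card := by
        apply Finset.card_bij (fun f _ => (f i₀).getD i₀)
        · intro f hf
          simp only [mem_filter, mem_univ, true_and] at hf
          obtain ⟨⟨h1, h2, h3⟩, h4⟩ := hf
          obtain ⟨t, ht, hft⟩ := h2 i₀ (mem_insert_self _ _)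
          rw [hft]
          simp only [Option.getD_some, mem_sdiff, mem_filter, mem_univ, true_and]
          refine ⟨ht, ?_⟩
          rintro ⟨i, hi, hgi⟩
          have hii : i ≠ i₀ := fun hc => hi₀ (hc ▸ hi)
          have : f i = g i := by
            rw [← h4, Function.update_of_ne hii]
          exact h3 i (mem_insert_of_mem hi) i₀ (mem_insert_self _ _) hii
            (by rw [this, hgi, hft])
        · intro f₁ hf₁ f₂ hf₂ heq
          simp only [mem_filter, mem_univ, true_and] at hf₁ hf₂
          obtain ⟨⟨_, h12, _⟩, h14⟩ := hf₁
          obtain ⟨⟨_, h22, _⟩, h24⟩ := hf₂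
          obtain ⟨t₁, _, hft₁⟩ := h12 i₀ (mem_insert_self _ _)
          obtain ⟨t₂, _, hft₂⟩ := h22 i₀ (mem_insert_self _ _)
          rw [hft₁, hft₂] at heq
          simp only [Option.getD_some] at heq
          funext i
          by_cases hii : i = i₀
          · subst hii; rw [hft₁, hft₂, heq]
          · have e1 : f₁ i = g i := by rw [← h14, Function.update_of_ne hii]
            have e2 : f₂ i = g i := by rw [← h24, Function.update_of_ne hii]
            rw [e1, e2]
        · intro t ht
          simp only [mem_sdiff, mem_filter, mem_univ, true_and] at ht
          obtain ⟨htA, htu⟩ := ht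
          refine ⟨Function.update g i₀ (some t), ?_, by simp⟩
          simp only [mem_filter, mem_univ, true_and]
          refine ⟨⟨?_, ?_, ?_⟩, ?_⟩
          · intro i hi
            have hii : i ≠ i₀ := fun hc => hi (hc ▸ mem_insert_self _ _)
            rw [Function.update_of_ne hii]
            exact hg1 i (fun hc => hi (mem_insert_of_mem hc))
          · intro i hi
            rcases mem_insert.mp hi with hc | hc
            · subst hc; exact ⟨t, htA, by simp⟩
            · have hii : i ≠ i₀ := fun h => hi₀ (h ▸ hc)
              rw [Function.update_of_ne hii]
              exact hg2 i hc
          · intro i hi i' hi' hne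
            rcases mem_insert.mp hi with hc | hc <;> rcases mem_insert.mp hi' with hc' | hc'
            · exact absurd (hc.trans hc'.symm) hne
            · rw [hc]
              have hii' : i' ≠ i₀ := fun h => hi₀ (h ▸ hc')
              rw [Function.update_self, Function.update_of_ne hii']
              intro hcon
              exact htu ⟨i', hc', hcon.symm⟩
            · rw [hc']
              have hii : i ≠ i₀ := fun h => hi₀ (h ▸ hc)
              rw [Function.update_self, Function.update_of_ne hii]
              intro hcon
              exact htu ⟨i, hc, hcon⟩
            · have hii : i ≠ i₀ := fun h => hi₀ (h ▸ hc)
              have hii' : i' ≠ i₀ := fun h => hi₀ (h ▸ hc')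
              rw [Function.update_of_ne hii, Function.update_of_ne hii']
              exact hg3 i hc i' hc' hne
          · funext i
            by_cases hii : i = i₀
            · rw [hii]
              simpa using (hg1 i₀ hi₀).symm
            · rw [Function.update_of_ne hii, Function.update_of_ne hii]
      rw [hbij]
      -- count the available targets
      have hused : ((A x (jf i₀)) ∩ (univ.filter fun t => ∃ i ∈ S', g i = some t)).card
          = (S'.filter fun i => jf i = jf i₀).card := by
        symm
        apply Finset.card_bij (fun i _ => (g i).getD i₀)
        · intro i hi
          simp only [mem_filter] at hi
          obtain ⟨hiS, hij⟩ := hi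
          obtain ⟨t, ht, hgt⟩ := hg2 i hiS
          rw [hgt]
          simp only [Option.getD_some, mem_inter, mem_filter, mem_univ, true_and]
          exact ⟨hij ▸ ht, ⟨i, hiS, hgt⟩⟩
        · intro i₁ h₁ i₂ h₂ heq
          simp only [mem_filter] at h₁ h₂
          obtain ⟨t₁, _, hgt₁⟩ := hg2 i₁ h₁.1
          obtain ⟨t₂, _, hgt₂⟩ := hg2 i₂ h₂.1
          rw [hgt₁, hgt₂] at heq
          simp only [Option.getD_some] at heq
          by_contra hne
          exact hg3 i₁ h₁.1 i₂ h₂.1 hne (by rw [hgt₁, hgt₂, heq])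
        · intro t ht
          simp only [mem_inter, mem_filter, mem_univ, true_and] at ht
          obtain ⟨htA, i, hiS, hgi⟩ := ht
          obtain ⟨t', ht', hgt'⟩ := hg2 i hiS
          have : t' = t := by rw [hgt'] at hgi; exact Option.some_injective _ hgi
          subst this
          refine ⟨i, ?_, by rw [hgt']; simp⟩
          simp only [mem_filter]
          exact ⟨hiS, A_disj ht' htA⟩
      rw [show (A x (jf i₀)) \ (univ.filter fun t => ∃ i ∈ S', g i = some t)
            = (A x (jf i₀)) \ ((A x (jf i₀)) ∩ (univ.filter fun t => ∃ i ∈ S', g i = some t))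
          from (Finset.sdiff_inter_self_left _ _).symm,
        Finset.card_sdiff_of_subset Finset.inter_subset_left, hused]
    rw [Finset.sum_congr rfl hfiber, Finset.sum_const, smul_eq_mul, ih]
    -- now the descFactorial identity
    have hfl : ∀ j : Fin m, ((insert i₀ S').filter fun i => jf i = j)
        = if jf i₀ = j then insert i₀ (S'.filter fun i => jf i = j) else S'.filter fun i => jf i = j := by
      intro j
      rw [Finset.filter_insert]
    have hcount : ∀ j : Fin m, j ≠ jf i₀ →
        (((insert i₀ S').filter fun i => jf i = j)).card = ((S'.filter fun i => jf i = j)).card := by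
      intro j hj
      rw [hfl j, if_neg (Ne.symm hj)]
    have hcount0 : (((insert i₀ S').filter fun i => jf i = jf i₀)).card
        = ((S'.filter fun i => jf i = jf i₀)).card + 1 := by
      rw [hfl _, if_pos rfl, Finset.card_insert_of_notMem (fun hc => hi₀ (Finset.mem_filter.mp hc).1)]
    rw [← Finset.mul_prod_erase univ
          (fun j => ((A x j).card).descFactorial (((insert i₀ S').filter fun i => jf i = j).card))
          (mem_univ (jf i₀))]
    rw [hcount0, Nat.descFactorial_succ]
    rw [show (∏ j ∈ univ.erase (jf i₀),
          ((A x j).card).descFactorial (((insert i₀ S').filter fun i => jf i = j).card))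
        = ∏ j ∈ univ.erase (jf i₀),
          ((A x j).card).descFactorial ((S'.filter fun i => jf i = j).card) from
      Finset.prod_congr rfl (fun j hj => by rw [hcount j (Finset.mem_erase.mp hj).1])]
    rw [← Finset.mul_prod_erase univ
          (fun j => ((A x j).card).descFactorial ((S'.filter fun i => jf i = j).card))
          (mem_univ (jf i₀))]
    ring
lemma countT (x : Fin n → Fin m → ℝ) (jf : Fin n → Fin m) (S : Finset (Fin n)) :
    (univ.filter fun σ : Equiv.Perm (Fin n) => ∀ i ∈ S, x (σ i) = Pi.single (jf i) 1).card
    = (∏ j, ((A x j).card).descFactorial ((S.filter fun i => jf i = j).card))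
        * (n - S.card).factorial := by
  have hmaps : ∀ σ ∈ (univ.filter fun σ : Equiv.Perm (Fin n) =>
      ∀ i ∈ S, x (σ i) = Pi.single (jf i) 1),
      (fun i => if i ∈ S then some (σ i) else none) ∈ univ.filter
        fun f : Fin n → Option (Fin n) =>
        (∀ i, i ∉ S → f i = none) ∧ (∀ i ∈ S, ∃ t ∈ A x (jf i), f i = some t) ∧
        ∀ i ∈ S, ∀ i' ∈ S, i ≠ i' → f i ≠ f i' := by
    intro σ hσ
    simp only [mem_filter, mem_univ, true_and] at hσ ⊢
    refine ⟨fun i hi => if_neg hi, fun i hi => ?_, fun i hi i' hi' hne => ?_⟩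
    · refine ⟨σ i, ?_, if_pos hi⟩
      simp only [A, mem_filter, mem_univ, true_and]
      exact hσ i hi
    · rw [if_pos hi, if_pos hi']
      intro hc
      exact hne (σ.injective (Option.some_injective _ hc))
  rw [Finset.card_eq_sum_card_fiberwise hmaps]
  have hfib : ∀ f ∈ univ.filter
      (fun f : Fin n → Option (Fin n) =>
        (∀ i, i ∉ S → f i = none) ∧ (∀ i ∈ S, ∃ t ∈ A x (jf i), f i = some t) ∧
        ∀ i ∈ S, ∀ i' ∈ S, i ≠ i' → f i ≠ f i'),
      ((univ.filter fun σ : Equiv.Perm (Fin n) => ∀ i ∈ S, x (σ i) = Pi.single (jf i) 1).filter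
        fun σ => (fun i => if i ∈ S then some (σ i) else none) = f).card
      = (n - S.card).factorial := by
    intro f hf
    simp only [mem_filter, mem_univ, true_and] at hf
    obtain ⟨hf1, hf2, hf3⟩ := hf
    set g : Fin n → Fin n := fun i => (f i).getD i with hg
    have hgval : ∀ i ∈ S, f i = some (g i) := by
      intro i hi
      obtain ⟨t, _, hft⟩ := hf2 i hi
      rw [hft, hg]
      simp [hft]
    have hgA : ∀ i ∈ S, g i ∈ A x (jf i) := by
      intro i hi
      obtain ⟨t, ht, hft⟩ := hf2 i hi
      have : g i = t := by rw [hg]; simp [hft]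
      rw [this]; exact ht
    have hginj : ∀ i ∈ S, ∀ i' ∈ S, i ≠ i' → g i ≠ g i' := by
      intro i hi i' hi' hne hc
      exact hf3 i hi i' hi' hne (by rw [hgval i hi, hgval i' hi', hc])
    have hcardIm : (S.image g).card = S.card := by
      apply Finset.card_image_of_injOn
      intro i hi i' hi' hc
      by_contra hne
      exact hginj i (by simpa using hi) i' (by simpa using hi') hne hc
    have hcompl : (univ \ S).card = (univ \ S.image g).card := by
      rw [Finset.card_sdiff_of_subset (subset_univ _), Finset.card_sdiff_of_subset (subset_univ _), hcardIm]
    have e : {i // i ∈ univ \ S} ≃ {i // i ∈ univ \ S.image g} := Finset.equivOfCardEq hcompl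
    set σfun : Fin n → Fin n := fun i =>
      if h : i ∈ S then g i else (e ⟨i, by simp [h]⟩ : Fin n) with hσfun
    have hinj : Function.Injective σfun := by
      intro a b hab
      rw [hσfun] at hab
      beta_reduce at hab
      by_cases ha : a ∈ S <;> by_cases hb : b ∈ S
      · rw [dif_pos ha, dif_pos hb] at hab
        by_contra hne
        exact hginj a ha b hb hne hab
      · rw [dif_pos ha, dif_neg hb] at hab
        exfalso
        have h1 : g a ∈ S.image g := Finset.mem_image_of_mem g ha
        have h2 := (e ⟨b, by simp [hb]⟩).2
        rw [← hab] at h2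
        simp only [Finset.mem_sdiff] at h2
        exact h2.2 h1
      · rw [dif_neg ha, dif_pos hb] at hab
        exfalso
        have h1 : g b ∈ S.image g := Finset.mem_image_of_mem g hb
        have h2 := (e ⟨a, by simp [ha]⟩).2
        rw [hab] at h2
        simp only [Finset.mem_sdiff] at h2
        exact h2.2 h1
      · rw [dif_neg ha, dif_neg hb] at hab
        have := e.injective (Subtype.ext hab)
        exact Subtype.mk_eq_mk.mp this
    have hbij : Function.Bijective σfun := Finite.injective_iff_bijective.mp hinj
    set σ₀ : Equiv.Perm (Fin n) := Equiv.ofBijective σfun hbij with hσ₀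
    have hσ₀app : ∀ i ∈ S, σ₀ i = g i := by
      intro i hi
      rw [hσ₀]
      show σfun i = g i
      rw [hσfun]
      exact dif_pos hi
    have hT : ∀ i ∈ S, x (σ₀ i) = Pi.single (jf i) 1 := by
      intro i hi
      rw [hσ₀app i hi]
      have := hgA i hi
      simp only [A, mem_filter, mem_univ, true_and] at this
      exact this
    have hFσ₀ : (fun i => if i ∈ S then some (σ₀ i) else none) = f := by
      funext i
      by_cases hi : i ∈ S
      · rw [if_pos hi, hσ₀app i hi, hgval i hi]
      · rw [if_neg hi, hf1 i hi]
    have heq : ((univ.filter fun σ : Equiv.Perm (Fin n) =>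
          ∀ i ∈ S, x (σ i) = Pi.single (jf i) 1).filter
          fun σ => (fun i => if i ∈ S then some (σ i) else none) = f)
        = univ.filter fun σ : Equiv.Perm (Fin n) => ∀ i ∈ S, σ i = σ₀ i := by
      ext σ
      simp only [mem_filter, mem_univ, true_and]
      constructor
      · rintro ⟨h1, h2⟩ i hi
        have := congrFun (h2.trans hFσ₀.symm) i
        rw [if_pos hi, if_pos hi] at this
        exact Option.some_injective _ this
      · intro h
        constructor
        · intro i hi
          rw [h i hi]
          exact hT i hi
        · rw [← hFσ₀]
          funext i
          by_cases hi : i ∈ S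
          · rw [if_pos hi, if_pos hi, h i hi]
          · rw [if_neg hi, if_neg hi]
    rw [heq, card_agree]
  rw [Finset.sum_congr rfl hfib, Finset.sum_const, smul_eq_mul, card_In x jf S]
lemma cast_desc (k c : ℕ) :
    ((k.descFactorial c : ℕ) : ℝ) = ∏ t ∈ range c, ((k : ℝ) - t) := by
  induction c with
  | zero => simp
  | succ c ih =>
    rw [Finset.prod_range_succ, ← ih, Nat.descFactorial_succ, Nat.cast_mul]
    rcases le_or_gt c k with h | h
    · rw [Nat.cast_sub h]; ring
    · have h0 : k.descFactorial c = 0 := Nat.descFactorial_eq_zero_iff_lt.mpr h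
      rw [h0]; simp

/-- exponent pattern data -/
def isGood (a : (Fin n × Fin m) →₀ ℕ) : Prop :=
  ∀ i j j', a (i, j) ≠ 0 → a (i, j') ≠ 0 → j = j'

noncomputable def cdeg (a : (Fin n × Fin m) →₀ ℕ) (j : Fin m) : ℕ :=
  (univ.filter fun i => a (i, j) ≠ 0).card

noncomputable def sdeg (a : (Fin n × Fin m) →₀ ℕ) : ℕ := ∑ j, cdeg a j

noncomputable def Qm (a : (Fin n × Fin m) →₀ ℕ) : MvPolynomial (Fin m) ℝ :=
  if isGood a then
    MvPolynomial.C (((n - sdeg a).factorial : ℝ) / (n.factorial : ℝ)) *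
      ∏ j, ∏ t ∈ range (cdeg a j), (MvPolynomial.X j - MvPolynomial.C (t : ℝ))
  else 0

lemma key (hm : 0 < m) (x : Fin n → Fin m → ℝ)
    (hx : ∀ i, x i = 0 ∨ ∃ j, x i = Pi.single j 1) (a : (Fin n × Fin m) →₀ ℕ) :
    (∑ σ : Equiv.Perm (Fin n), ∏ v : Fin n × Fin m, x (σ v.1) v.2 ^ a v)
      = MvPolynomial.eval (∑ i, x i) (Qm a) * (n.factorial : ℝ) := by
  have hkj : ∀ j : Fin m, (∑ i, x i) j = ((A x j).card : ℝ) := by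
    intro j
    rw [Finset.sum_apply]
    rw [show (∑ i, x i j) = ∑ i, if x i = Pi.single j 1 then (1:ℝ) else 0 from
      Finset.sum_congr rfl (fun i _ => xval hx i j)]
    rw [Finset.sum_boole]
    rfl
  by_cases hg : isGood a
  · -- good case
    set jf : Fin n → Fin m := fun i =>
      if h : ∃ j, a (i, j) ≠ 0 then h.choose else ⟨0, hm⟩ with hjfdef
    have hjf : ∀ i j, a (i, j) ≠ 0 → jf i = j := by
      intro i j hij
      have h : ∃ j', a (i, j') ≠ 0 := ⟨j, hij⟩
      rw [hjfdef]
      beta_reduce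
      rw [dif_pos h]
      exact hg i _ j h.choose_spec hij
    set S : Finset (Fin n) := univ.filter fun i => ∃ j, a (i, j) ≠ 0 with hSdef
    have hprod : ∀ σ : Equiv.Perm (Fin n),
        (∏ v : Fin n × Fin m, x (σ v.1) v.2 ^ a v)
        = if (∀ i ∈ S, x (σ i) = Pi.single (jf i) 1) then (1:ℝ) else 0 := by
      intro σ
      by_cases hcond : ∀ i ∈ S, x (σ i) = Pi.single (jf i) 1
      · rw [if_pos hcond]
        apply Finset.prod_eq_one
        rintro ⟨i, j⟩ -
        by_cases hz : a (i, j) = 0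
        · rw [hz, pow_zero]
        · have hiS : i ∈ S := by rw [hSdef]; simp only [mem_filter, mem_univ, true_and]; exact ⟨j, hz⟩
          have := hcond i hiS
          rw [hjf i j hz] at this
          rw [this, Pi.single_eq_same, one_pow]
      · rw [if_neg hcond]
        push_neg at hcond
        obtain ⟨i₀, hi₀S, hne⟩ := hcond
        apply Finset.prod_eq_zero (mem_univ (i₀, jf i₀))
        have ha0 : a (i₀, jf i₀) ≠ 0 := by
          have : ∃ j, a (i₀, j) ≠ 0 := by
            rw [hSdef] at hi₀S; simpa using hi₀S
          obtain ⟨j, hj⟩ := this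
          rw [hjf i₀ j hj]
          exact hj
        have hval : x (σ i₀) (jf i₀) = 0 := by
          rw [xval hx (σ i₀) (jf i₀), if_neg hne]
        rw [hval, zero_pow ha0]
    rw [Finset.sum_congr rfl (fun σ _ => hprod σ), Finset.sum_boole]
    rw [countT x jf S]
    have hSc : ∀ j, S.filter (fun i => jf i = j) = univ.filter (fun i => a (i, j) ≠ 0) := by
      intro j
      ext i
      simp only [hSdef, Finset.filter_filter, mem_filter, mem_univ, true_and]
      constructor
      · rintro ⟨⟨j', hj'⟩, hjeq⟩
        rwa [← hjeq, hjf i j' hj']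
      · intro h
        exact ⟨⟨j, h⟩, hjf i j h⟩
    have hScard : S.card = sdeg a := by
      rw [Finset.card_eq_sum_card_fiberwise (f := jf) (t := univ) (fun i _ => mem_univ _)]
      unfold sdeg cdeg
      exact Finset.sum_congr rfl fun j _ => by rw [hSc j]
    have hcc : ∀ j, (S.filter (fun i => jf i = j)).card = cdeg a j := fun j => by
      rw [hSc j]; rfl
    simp only [hcc]
    rw [Qm, if_pos hg]
    rw [map_mul, MvPolynomial.eval_C, map_prod]
    have hev : ∀ j : Fin m,
        MvPolynomial.eval (∑ i, x i) (∏ t ∈ range (cdeg a j),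
          (MvPolynomial.X j - MvPolynomial.C (t : ℝ)))
        = (((A x j).card.descFactorial (cdeg a j) : ℕ) : ℝ) := by
      intro j
      rw [map_prod, cast_desc]
      apply Finset.prod_congr rfl
      intro t _
      rw [map_sub, MvPolynomial.eval_X, MvPolynomial.eval_C, hkj j]
    rw [Finset.prod_congr rfl (fun j _ => hev j)]
    have hfact : (n.factorial : ℝ) ≠ 0 := Nat.cast_ne_zero.mpr (Nat.factorial_ne_zero n)
    rw [hScard]
    push_cast
    field_simp
  · -- bad case
    rw [Qm, if_neg hg]
    simp only [map_zero, zero_mul]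
    apply Finset.sum_eq_zero
    intro σ _
    rw [show ¬ isGood a ↔ ∃ i j j', a (i,j) ≠ 0 ∧ a (i,j') ≠ 0 ∧ j ≠ j' by
      unfold isGood; push_neg; tauto] at hg
    obtain ⟨i, j, j', hj, hj', hne⟩ := hg
    rcases hx (σ i) with hz | ⟨j'', hs⟩
    · apply Finset.prod_eq_zero (mem_univ (i, j))
      show x (σ i) j ^ a (i, j) = 0
      rw [show x (σ i) j = 0 by rw [hz]; rfl, zero_pow hj]
    · by_cases hjj : j'' = j
      · apply Finset.prod_eq_zero (mem_univ (i, j'))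
        show x (σ i) j' ^ a (i, j') = 0
        have h0 : x (σ i) j' = 0 := by
          rw [hs]
          exact Pi.single_eq_of_ne (by rw [hjj]; exact Ne.symm hne) 1
        rw [h0, zero_pow hj']
      · apply Finset.prod_eq_zero (mem_univ (i, j))
        show x (σ i) j ^ a (i, j) = 0
        have h0 : x (σ i) j = 0 := by
          rw [hs]
          exact Pi.single_eq_of_ne (Ne.symm hjj) 1
        rw [h0, zero_pow hj]
lemma deg_Qm (a : (Fin n × Fin m) →₀ ℕ) : (Qm a).totalDegree ≤ a.sum fun _ e => e := by
  unfold Qm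
  split_ifs with hg
  · refine le_trans (MvPolynomial.totalDegree_mul _ _) ?_
    rw [MvPolynomial.totalDegree_C, zero_add]
    refine le_trans (MvPolynomial.totalDegree_finset_prod _ _) ?_
    have h1 : ∀ j, (∏ t ∈ range (cdeg a j),
        (MvPolynomial.X j - MvPolynomial.C (t:ℝ))).totalDegree ≤ cdeg a j := by
      intro j
      refine le_trans (MvPolynomial.totalDegree_finset_prod _ _) ?_
      calc ∑ t ∈ range (cdeg a j), (MvPolynomial.X (R := ℝ) j - MvPolynomial.C (t:ℝ)).totalDegree
          ≤ ∑ _t ∈ range (cdeg a j), 1 := by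
            apply Finset.sum_le_sum
            intro t _
            rw [sub_eq_add_neg, ← map_neg]
            refine le_trans (MvPolynomial.totalDegree_add _ _) (max_le ?_ ?_)
            · exact le_of_eq (MvPolynomial.totalDegree_X j)
            · rw [MvPolynomial.totalDegree_C]
              exact zero_le_one
        _ = cdeg a j := by simp
    refine le_trans (Finset.sum_le_sum fun j _ => h1 j) ?_
    have h2 : (∑ j, cdeg a j) ≤ a.sum fun _ e => e := by
      rw [Finsupp.sum_fintype _ _ (fun _ => rfl)]
      calc (∑ j, cdeg a j) ≤ ∑ j, ∑ i, a (i, j) := by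
            apply Finset.sum_le_sum
            intro j _
            rw [cdeg, Finset.card_filter]
            apply Finset.sum_le_sum
            intro i _
            split_ifs with h
            · exact Nat.one_le_iff_ne_zero.mpr h
            · exact Nat.zero_le _
        _ = ∑ v : Fin n × Fin m, a v := (Fintype.sum_prod_type_right _).symm
    exact h2
  · simp

end Stmt11

attribute [local instance] Classical.propDecidable

/-- Symmetrization for vector-valued inputs: for a polynomial `p : (ℝ^m)^n → ℝ` of degree `d`,
there is a polynomial `p* : ℝ^m → ℝ` of degree at most `d` such that for all
`x₁,...,xₙ ∈ {e₁,...,e_m, 0}`, the average of `p(x_{σ(1)},...,x_{σ(n)})` over all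
permutations `σ ∈ Sₙ` equals `p*(x₁ + ⋯ + xₙ)`. -/
theorem stmt_11 (n m : ℕ) (p : MvPolynomial (Fin n × Fin m) ℝ) :
    ∃ q : MvPolynomial (Fin m) ℝ, q.totalDegree ≤ p.totalDegree ∧
      ∀ x : Fin n → Fin m → ℝ,
        (∀ i, x i = 0 ∨ ∃ j, x i = Pi.single j 1) →
        (∑ σ : Equiv.Perm (Fin n),
            MvPolynomial.eval (fun q' : Fin n × Fin m => x (σ q'.1) q'.2) p) /
          (Nat.factorial n : ℝ) =
        MvPolynomial.eval (∑ i, x i) q := by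
  have hfact : ((n.factorial : ℝ)) ≠ 0 := Nat.cast_ne_zero.mpr (Nat.factorial_ne_zero n)
  rcases Nat.eq_zero_or_pos m with hm0 | hm
  · subst hm0
    obtain ⟨r, rfl⟩ := MvPolynomial.C_surjective (Fin n × Fin 0) p
    refine ⟨MvPolynomial.C r, by simp, ?_⟩
    intro x hx
    simp only [MvPolynomial.eval_C]
    rw [Finset.sum_const, Finset.card_univ, Fintype.card_perm, Fintype.card_fin, nsmul_eq_mul]
    field_simp
  · refine ⟨∑ a ∈ p.support, MvPolynomial.C (p.coeff a) * Stmt11.Qm a, ?_, ?_⟩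
    · refine le_trans (MvPolynomial.totalDegree_finset_sum _ _) ?_
      apply Finset.sup_le
      intro a ha
      refine le_trans (MvPolynomial.totalDegree_mul _ _) ?_
      rw [MvPolynomial.totalDegree_C, zero_add]
      exact le_trans (Stmt11.deg_Qm a) (MvPolynomial.le_totalDegree ha)
    · intro x hx
      have h1 : ∀ σ : Equiv.Perm (Fin n),
          MvPolynomial.eval (fun q' : Fin n × Fin m => x (σ q'.1) q'.2) p
          = ∑ a ∈ p.support, p.coeff a * ∏ v : Fin n × Fin m, x (σ v.1) v.2 ^ a v := by
        intro σ
        rw [MvPolynomial.eval_eq']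
      rw [Finset.sum_congr rfl (fun σ _ => h1 σ), Finset.sum_comm]
      have h2 : ∀ a ∈ p.support,
          (∑ σ : Equiv.Perm (Fin n), p.coeff a * ∏ v : Fin n × Fin m, x (σ v.1) v.2 ^ a v)
          = p.coeff a * (MvPolynomial.eval (∑ i, x i) (Stmt11.Qm a) * (n.factorial : ℝ)) := by
        intro a _
        rw [← Finset.mul_sum, Stmt11.key hm x hx a]
      rw [Finset.sum_congr rfl h2, map_sum]
      have h3 : ∀ a ∈ p.support,
          MvPolynomial.eval (∑ i, x i) (MvPolynomial.C (p.coeff a) * Stmt11.Qm a)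
          = p.coeff a * MvPolynomial.eval (∑ i, x i) (Stmt11.Qm a) := fun a _ => by
        rw [map_mul, MvPolynomial.eval_C]
      rw [Finset.sum_congr rfl h3, div_eq_iff hfact, Finset.sum_mul]
      exact Finset.sum_congr rfl (fun a _ => by ring)
end

section
/- Let λ₁,...,λₙ be probability distributions on ℕ satisfying λᵢ(t) ≤ C·α^t/(t+1)² for all t ∈ ℕ, where C ≥ 0 and 0 ≤ α ≤ 1. Then for all θ ≥ 8·C·e·n·(1 + ln n), the probability under the product distribution λ₁ × ··· × λₙ that a sampled vector v has ∑vᵢ ≥ θ is at most α^{θ/2}. -/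
/-!
Given `v` with `∑ vᵢ ≥ θ`, take a largest set `S` of coordinates that are all at least
`m(|S|) = θ / (4 (1 + ln n) |S|)`. By maximality, the coordinates outside `S`, in decreasing
order, lie below `m(|S| + 1), m(|S| + 2), …`, so together they contribute at most
`θ Hₙ / (4 (1 + ln n)) ≤ θ / 4`, and `∑_{i ∈ S} vᵢ ≥ θ / 2`. For a fixed `S`, the mass of such
vectors is at most `α^{θ/2} ∏_{i ∈ S} ∑_{t ≥ m} C / (t + 1)² ≤ α^{θ/2} (C / m)^{|S|}`. By the
choice of `θ` this is at most `α^{θ/2} (k / (2 e n))^k` for `|S| = k`, and `C(n, k) kᵏ ≤ (e n)ᵏ`,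
so the union bound over `S` gives `α^{θ/2} ∑_k 2^{-k} ≤ α^{θ/2}`.
-/

open Finset

theorem sum_Ico_one_div_succ_sq_le {a : ℕ} (ha : 0 < a) (k : ℕ) :
    ∑ t ∈ Ico a (a + k), 1 / ((t : ℝ) + 1) ^ 2 ≤ 1 / (a : ℝ) - 1 / ((a : ℝ) + k) := by
  induction k with
  | zero => simp
  | succ k ih =>
    have hpos : (0 : ℝ) < a + k := by positivity
    have hstep : 1 / ((a : ℝ) + k + 1) ^ 2 ≤ 1 / ((a : ℝ) + k) - 1 / ((a : ℝ) + k + 1) := by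
      rw [div_sub_div _ _ hpos.ne' (by positivity),
        div_le_div_iff₀ (by positivity) (by positivity)]
      nlinarith
    rw [← add_assoc, sum_Ico_succ_top (by omega)]
    push_cast
    rw [← add_assoc]
    linarith

theorem sum_one_div_succ_sq_le_of_le {a : ℕ} (ha : 0 < a) {w : Finset ℕ}
    (hw : ∀ t ∈ w, a ≤ t) : ∑ t ∈ w, 1 / ((t : ℝ) + 1) ^ 2 ≤ 1 / (a : ℝ) := by
  have hsub : w ⊆ Ico a (a + (w.sup id + 1)) := fun t ht =>
    mem_Ico.2 ⟨hw t ht, by have := le_sup (f := id) ht; simp at this; omega⟩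
  calc ∑ t ∈ w, 1 / ((t : ℝ) + 1) ^ 2
      ≤ ∑ t ∈ Ico a (a + (w.sup id + 1)), 1 / ((t : ℝ) + 1) ^ 2 :=
        sum_le_sum_of_subset_of_nonneg hsub fun _ _ _ => by positivity
    _ ≤ 1 / (a : ℝ) - 1 / ((a : ℝ) + (w.sup id + 1 : ℕ)) := sum_Ico_one_div_succ_sq_le ha _
    _ ≤ 1 / (a : ℝ) := sub_le_self _ (by positivity)

theorem sum_filter_one_div_succ_sq_le {μ : ℝ} (hμ : 0 < μ) (w : Finset ℕ) :
    ∑ t ∈ w with μ ≤ ((t : ℕ) : ℝ), 1 / ((t : ℝ) + 1) ^ 2 ≤ 1 / μ :=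
  calc ∑ t ∈ w with μ ≤ ((t : ℕ) : ℝ), 1 / ((t : ℝ) + 1) ^ 2 ≤ 1 / (⌈μ⌉₊ : ℝ) :=
        sum_one_div_succ_sq_le_of_le (Nat.ceil_pos.2 hμ) fun _ ht =>
          Nat.ceil_le.2 (mem_filter.1 ht).2
    _ ≤ 1 / μ := one_div_le_one_div_of_le hμ (Nat.le_ceil μ)

theorem choose_mul_pow_self_le (n k : ℕ) :
    (n.choose k : ℝ) * k ^ k ≤ (Real.exp 1 * n) ^ k := by
  have hchoose : (n.choose k : ℝ) * k.factorial ≤ n ^ k := by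
    have := Nat.choose_le_pow_div (α := ℝ) k n
    rwa [le_div_iff₀ (by positivity)] at this
  have hpow : (k : ℝ) ^ k ≤ Real.exp 1 ^ k * k.factorial := by
    have := Real.pow_div_factorial_le_exp (k : ℝ) k.cast_nonneg k
    rwa [div_le_iff₀ (by positivity), ← Real.exp_one_pow] at this
  calc (n.choose k : ℝ) * k ^ k ≤ (n.choose k : ℝ) * (Real.exp 1 ^ k * k.factorial) := by
        gcongr
    _ = Real.exp 1 ^ k * ((n.choose k : ℝ) * k.factorial) := by ring
    _ ≤ (Real.exp 1 * n) ^ k := by rw [mul_pow]; gcongr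

theorem sum_choose_mul_div_pow_le_one (n : ℕ) :
    ∑ k ∈ Icc 1 n, (n.choose k : ℝ) * (k / (2 * Real.exp 1 * n)) ^ k ≤ 1 :=
  calc ∑ k ∈ Icc 1 n, (n.choose k : ℝ) * (k / (2 * Real.exp 1 * n)) ^ k
      ≤ ∑ k ∈ Icc 1 n, (1 / 2 : ℝ) ^ k := sum_le_sum fun k hk => by
        have hn : (0 : ℝ) < n := by
          have := mem_Icc.1 hk
          exact_mod_cast this.1.trans this.2
        rw [div_pow, ← mul_div_assoc, div_le_iff₀ (by positivity), ← mul_pow,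
          show 1 / 2 * (2 * Real.exp 1 * n) = Real.exp 1 * n by ring]
        exact choose_mul_pow_self_le n k
    _ = ∑ k ∈ range n, (1 / 2 : ℝ) ^ (k + 1) := by rw [range_eq_Ico, sum_Ico_add']; rfl
    _ = 1 / 2 * ∑ k ∈ range n, (1 / 2 : ℝ) ^ k := by simp only [mul_sum, pow_succ, mul_comm]
    _ ≤ 1 := by linarith [sum_geometric_two_le n]

theorem sum_le_sum_range_of_card_filter_le {ι M : Type*} [DecidableEq ι] [AddCommMonoid M]
    [LinearOrder M] [IsOrderedAddMonoid M] (x : ι → M) (I : Finset ι) (a : ℕ → M) (ha : ∀ j, #{i ∈ I | a j ≤ x i} ≤ j) :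
    ∑ i ∈ I, x i ≤ ∑ j ∈ range #I, a j := by
  induction I using Finset.induction_on_max_value x generalizing a with
  | empty => simp
  | insert i₀ s hi₀ hmax ih =>
    have h₀ : x i₀ < a 0 := by
      have := ha 0
      rw [filter_insert] at this
      split_ifs at this with h
      · simp at this
      · exact not_le.1 h
    have hshift : ∀ j, #{i ∈ s | a (j + 1) ≤ x i} ≤ j := by
      intro j
      have := ha (j + 1)
      rw [filter_insert] at this
      split_ifs at this with h
      · rw [card_insert_of_notMem fun hm => hi₀ (mem_filter.1 hm).1] at this
        omega
      · rw [filter_false_of_mem fun i hi hai => h (hai.trans (hmax i hi))]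
        simp
    rw [sum_insert hi₀, card_insert_of_notMem hi₀, sum_range_succ', add_comm (x i₀)]
    exact add_le_add (ih _ hshift) h₀.le

theorem exists_forall_le_and_sum_compl_le {ι M : Type*} [Fintype ι] [DecidableEq ι]
    [AddCommMonoid M] [LinearOrder M] [IsOrderedAddMonoid M] (x : ι → M) {m : ℕ → M} (hm : AntitoneOn m (Set.Ici 1)) (hm0 : ∀ k, 0 ≤ m k) :
    ∃ S : Finset ι, (∀ i ∈ S, m #S ≤ x i) ∧
      ∑ i ∈ Sᶜ, x i ≤ ∑ k ∈ range (Fintype.card ι), m (k + 1) := by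
  obtain ⟨S, hS, hmax⟩ :=
    exists_max_image {S : Finset ι | ∀ i ∈ S, m #S ≤ x i} card ⟨∅, by simp⟩
  replace hS := (mem_filter.1 hS).2
  refine ⟨S, hS, ?_⟩
  -- Otherwise those `j + 1` coordinates could be added to `S`, contradicting maximality.
  have hcount : ∀ j, #{i ∈ Sᶜ | m (#S + j + 1) ≤ x i} ≤ j := by
    intro j
    by_contra! hj
    set T := {i ∈ Sᶜ | m (#S + j + 1) ≤ x i}
    have hdisj : Disjoint S T :=
      disjoint_left.2 fun i hiS hiT => mem_compl.1 (mem_filter.1 hiT).1 hiS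
    have hST : ∀ i ∈ S ∪ T, m #(S ∪ T) ≤ x i := by
      rw [card_union_of_disjoint hdisj]
      intro i hi
      rcases mem_union.1 hi with hi | hi
      · have : 1 ≤ #S := card_pos.2 ⟨i, hi⟩
        exact (hm (Set.mem_Ici.2 this) (Set.mem_Ici.2 (by omega)) (by omega)).trans (hS i hi)
      · exact (hm (Set.mem_Ici.2 (by omega)) (Set.mem_Ici.2 (by omega)) (by omega)).trans
          (mem_filter.1 hi).2
    have := hmax (S ∪ T) (by simpa using hST)
    rw [card_union_of_disjoint hdisj] at this
    omega
  calc ∑ i ∈ Sᶜ, x i ≤ ∑ j ∈ range #Sᶜ, m (#S + j + 1) :=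
        sum_le_sum_range_of_card_filter_le x _ _ hcount
    _ ≤ ∑ k ∈ range (Fintype.card ι), m (k + 1) := by
        rw [← card_add_card_compl S, sum_range_add]
        exact le_add_of_nonneg_left (sum_nonneg fun k _ => hm0 _)

/-- The level `m(k)` of the proof idea; `threshold θ n 0 = 0` is a junk value. -/
noncomputable def threshold (θ : ℝ) (n k : ℕ) : ℝ := θ / (4 * (1 + Real.log n) * k)

section threshold

variable {θ : ℝ} (n : ℕ)

theorem threshold_nonneg (hθ : 0 ≤ θ) (k : ℕ) : 0 ≤ threshold θ n k := by
  have := Real.log_natCast_nonneg n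
  unfold threshold
  positivity

theorem threshold_pos (hθ : 0 < θ) {k : ℕ} (hk : 0 < k) : 0 < threshold θ n k := by
  have := Real.log_natCast_nonneg n
  unfold threshold
  positivity

theorem antitoneOn_threshold (hθ : 0 ≤ θ) : AntitoneOn (threshold θ n) (Set.Ici 1) := by
  intro j hj k _ hjk
  have := Real.log_natCast_nonneg n
  have hj : (1 : ℝ) ≤ j := by exact_mod_cast hj
  unfold threshold
  gcongr

theorem sum_range_threshold_le (hθ : 0 ≤ θ) :
    ∑ k ∈ range n, threshold θ n (k + 1) ≤ θ / 4 := by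
  have hL : 0 < 1 + Real.log n := by linarith [Real.log_natCast_nonneg n]
  calc ∑ k ∈ range n, threshold θ n (k + 1)
      = θ / (4 * (1 + Real.log n)) * (harmonic n : ℝ) := by
        simp only [threshold, harmonic, Rat.cast_sum, mul_sum]
        refine sum_congr rfl fun k _ => ?_
        push_cast
        field_simp
    _ ≤ θ / (4 * (1 + Real.log n)) * (1 + Real.log n) := by
        gcongr
        exact harmonic_le_one_add_log n
    _ = θ / 4 := by field_simp

theorem div_threshold_le {C : ℝ} (hθ : 8 * C * Real.exp 1 * n * (1 + Real.log n) ≤ θ)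
    (hθ0 : 0 < θ) (hn : 0 < n) {k : ℕ} (hk : 0 < k) :
    C / threshold θ n k ≤ k / (2 * Real.exp 1 * n) := by
  have hL : 0 < 1 + Real.log n := by linarith [Real.log_natCast_nonneg n]
  have hn : (0 : ℝ) < n := by exact_mod_cast hn
  have hk : (0 : ℝ) < k := by exact_mod_cast hk
  rw [threshold, div_div_eq_mul_div, div_le_div_iff₀ hθ0 (by positivity)]
  nlinarith [mul_le_mul_of_nonneg_left hθ hk.le]

end threshold

theorem exists_heavy_subset {ι : Type*} [Fintype ι] [DecidableEq ι] {θ : ℝ} (hθ : 0 < θ)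
    (x : ι → ℝ) (hx : θ ≤ ∑ i, x i) :
    ∃ S : Finset ι, S.Nonempty ∧ (∀ i ∈ S, threshold θ (Fintype.card ι) #S ≤ x i) ∧
      θ / 2 ≤ ∑ i ∈ S, x i := by
  obtain ⟨S, hS, hSc⟩ := exists_forall_le_and_sum_compl_le x
    (antitoneOn_threshold _ hθ.le) (threshold_nonneg _ hθ.le)
  have hsplit := sum_add_sum_compl S x
  have := sum_range_threshold_le (Fintype.card ι) hθ.le
  refine ⟨S, nonempty_iff_ne_empty.2 fun h => ?_, hS, by linarith⟩
  rw [h, compl_empty] at hSc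
  linarith

theorem sum_filter_le_sum_sum_filter {α β M : Type*} [AddCommMonoid M] [PartialOrder M]
    [IsOrderedAddMonoid M] (u : Finset α) (𝒮 : Finset β) {p : α → Prop} [DecidablePred p]
    {q : β → α → Prop} [∀ b, DecidablePred (q b)] {F : α → M} (hF : ∀ a, 0 ≤ F a)
    (h : ∀ a ∈ u, p a → ∃ b ∈ 𝒮, q b a) :
    ∑ a ∈ u with p a, F a ≤ ∑ b ∈ 𝒮, ∑ a ∈ u with q b a, F a := by
  simp only [sum_filter]
  rw [sum_comm]
  refine sum_le_sum fun a ha => ?_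
  split_ifs with hpa
  · obtain ⟨b, hb, hqb⟩ := h a ha hpa
    refine le_trans ?_ (single_le_sum (fun b _ => ?_) hb)
    · rw [if_pos hqb]
    · split_ifs
      exacts [hF a, le_rfl]
  · exact sum_nonneg fun b _ => by split_ifs; exacts [hF a, le_rfl]

theorem sum_prod_le_prod_of_sum_le {ι κ R : Type*} [Fintype ι] [DecidableEq ι] [DecidableEq κ]
    [CommSemiring R] [PartialOrder R] [IsOrderedRing R]
    (u : Finset (ι → κ)) {g : ι → κ → R} (hg : ∀ i t, 0 ≤ g i t) {b : ι → R}
    (hb : ∀ i (w : Finset κ), ∑ t ∈ w, g i t ≤ b i) :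
    ∑ v ∈ u, ∏ i, g i (v i) ≤ ∏ i, b i :=
  calc ∑ v ∈ u, ∏ i, g i (v i)
      ≤ ∑ v ∈ Fintype.piFinset fun i => u.image (· i), ∏ i, g i (v i) :=
        sum_le_sum_of_subset_of_nonneg
          (fun _ hv => Fintype.mem_piFinset.2 fun _ => mem_image_of_mem _ hv)
          fun _ _ _ => prod_nonneg fun i _ => hg i _
    _ = ∏ i, ∑ t ∈ u.image (· i), g i t := (prod_univ_sum _ _).symm
    _ ≤ ∏ i, b i := prod_le_prod (fun i _ => sum_nonneg fun t _ => hg i t) fun i _ => hb i _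

theorem pos_of_hasSum_one_of_le {f : ℕ → ℝ} (hf : HasSum f 1) {C α : ℝ} (hα : 0 ≤ α)
    (h : ∀ t, f t ≤ C * α ^ t / ((t : ℝ) + 1) ^ 2) : 0 < C := by
  by_contra! hC
  have : (1 : ℝ) ≤ 0 := hasSum_le (fun t => (h t).trans
    (div_nonpos_of_nonpos_of_nonneg (mul_nonpos_of_nonpos_of_nonneg hC (pow_nonneg hα t))
      (by positivity))) hf hasSum_zero
  linarith

theorem sum_prod_le_of_forall_le_of_le_sum {ι : Type*} [Fintype ι] [DecidableEq ι]
    {C α : ℝ} {lam : ι → ℕ → ℝ} (hC : 0 ≤ C) (hα0 : 0 ≤ α) (hα1 : α ≤ 1)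
    (hnonneg : ∀ i t, 0 ≤ lam i t) (hsum : ∀ i, HasSum (lam i) 1)
    (hbound : ∀ i t, lam i t ≤ C * α ^ t / ((t : ℝ) + 1) ^ 2)
    {μ s : ℝ} (hμ : 0 < μ) (hs : 0 ≤ s) (S : Finset ι) (E : Finset (ι → ℕ))
    (hE : ∀ v ∈ E, (∀ i ∈ S, μ ≤ v i) ∧ s ≤ ∑ i ∈ S, (v i : ℝ)) :
    ∑ v ∈ E, ∏ i, lam i (v i) ≤ α ^ s * (C / μ) ^ #S := by
  set g : ι → ℕ → ℝ := fun i t =>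
    if i ∈ S then (if μ ≤ t then C / ((t : ℝ) + 1) ^ 2 else 0) else lam i t
  have hg : ∀ i t, 0 ≤ g i t := fun i t => by
    simp only [g]; split_ifs <;> first | positivity | exact hnonneg i t
  have hpoint : ∀ v ∈ E, ∏ i, lam i (v i) ≤ α ^ s * ∏ i, g i (v i) := by
    intro v hv
    obtain ⟨hvμ, hvs⟩ := hE v hv
    calc ∏ i, lam i (v i) ≤ ∏ i, (if i ∈ S then α ^ v i else 1) * g i (v i) := by
          refine prod_le_prod (fun i _ => hnonneg i _) fun i _ => ?_
          by_cases hi : i ∈ S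
          · simp only [g, hi, hvμ i hi, if_true]
            exact (hbound i (v i)).trans_eq (by ring)
          · simp [g, hi]
      _ = α ^ (∑ i ∈ S, v i) * ∏ i, g i (v i) := by
          rw [prod_mul_distrib, prod_ite_mem, univ_inter, prod_pow_eq_pow_sum]
      _ ≤ α ^ s * ∏ i, g i (v i) := by
          gcongr
          · exact prod_nonneg fun i _ => hg i _
          · rw [← Real.rpow_natCast]
            exact Real.rpow_le_rpow_of_exponent_ge' hα0 hα1 hs (by exact_mod_cast hvs)
  have hcoord : ∀ i (w : Finset ℕ), ∑ t ∈ w, g i t ≤ if i ∈ S then C / μ else 1 := by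
    intro i w
    by_cases hi : i ∈ S
    · simp only [g, hi, if_true, ← sum_filter]
      calc ∑ t ∈ w with μ ≤ ((t : ℕ) : ℝ), C / ((t : ℝ) + 1) ^ 2
          = C * ∑ t ∈ w with μ ≤ ((t : ℕ) : ℝ), 1 / ((t : ℝ) + 1) ^ 2 := by
            rw [mul_sum]; simp only [mul_one_div]
        _ ≤ C * (1 / μ) := by gcongr; exact sum_filter_one_div_succ_sq_le hμ w
        _ = C / μ := mul_one_div C μ
    · simpa [g, hi] using sum_le_hasSum w (fun t _ => hnonneg i t) (hsum i)
  calc ∑ v ∈ E, ∏ i, lam i (v i) ≤ ∑ v ∈ E, α ^ s * ∏ i, g i (v i) := sum_le_sum hpoint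
    _ = α ^ s * ∑ v ∈ E, ∏ i, g i (v i) := (mul_sum _ _ _).symm
    _ ≤ α ^ s * ∏ i, if i ∈ S then C / μ else 1 := by
        gcongr
        exact sum_prod_le_prod_of_sum_le _ hg hcoord
    _ = α ^ s * (C / μ) ^ #S := by rw [prod_ite_mem, univ_inter, prod_const]

theorem stmt_12_general (n : ℕ) (hn : 1 ≤ n) (C α : ℝ) (hα0 : 0 ≤ α) (hα1 : α ≤ 1)
    (lam : Fin n → ℕ → ℝ) (hnonneg : ∀ i t, 0 ≤ lam i t) (hsum : ∀ i, HasSum (lam i) 1)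
    (hbound : ∀ i t, lam i t ≤ C * α ^ t / ((t : ℝ) + 1) ^ 2)
    (θ : ℝ) (hθ : 8 * C * Real.exp 1 * n * (1 + Real.log n) ≤ θ) :
    (∑' v : Fin n → ℕ, if θ ≤ (∑ i, (v i : ℝ)) then ∏ i, lam i (v i) else 0) ≤
      α ^ (θ / 2) := by
  have hC : 0 < C := pos_of_hasSum_one_of_le (hsum ⟨0, hn⟩) hα0 (hbound ⟨0, hn⟩)
  have hθ0 : 0 < θ := hθ.trans_lt' (by have := Real.log_natCast_nonneg n; positivity)
  set 𝒮 := (Icc 1 n).sigma fun k => powersetCard k (univ : Finset (Fin n))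
  refine tsum_le_of_sum_le' (Real.rpow_nonneg hα0 _) fun u => ?_
  rw [← sum_filter]
  calc ∑ v ∈ u with θ ≤ ∑ i, (v i : ℝ), ∏ i, lam i (v i)
      ≤ ∑ p ∈ 𝒮, ∑ v ∈ u with (∀ i ∈ p.2, threshold θ n p.1 ≤ v i) ∧
          θ / 2 ≤ ∑ i ∈ p.2, (v i : ℝ), ∏ i, lam i (v i) := by
        refine sum_filter_le_sum_sum_filter _ _ (fun v => prod_nonneg fun i _ => hnonneg i _)
          fun v _ hv => ?_
        obtain ⟨S, hSne, hSμ, hSs⟩ := exists_heavy_subset hθ0 (fun i => (v i : ℝ)) hv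
        rw [Fintype.card_fin] at hSμ
        exact ⟨⟨#S, S⟩, mem_sigma.2 ⟨mem_Icc.2 ⟨hSne.card_pos, card_le_univ S |>.trans_eq
          (Fintype.card_fin n)⟩, mem_powersetCard_univ.2 rfl⟩, hSμ, hSs⟩
    _ ≤ ∑ p ∈ 𝒮, α ^ (θ / 2) * (C / threshold θ n p.1) ^ p.1 := sum_le_sum fun ⟨k, S⟩ hp => by
        obtain ⟨hk, rfl⟩ : k ∈ Icc 1 n ∧ #S = k := by simpa [𝒮] using hp
        exact sum_prod_le_of_forall_le_of_le_sum hC.le hα0 hα1 hnonneg hsum hbound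
          (threshold_pos n hθ0 (mem_Icc.1 hk).1) (half_pos hθ0).le S _
          fun v hv => (mem_filter.1 hv).2
    _ = α ^ (θ / 2) * ∑ k ∈ Icc 1 n, (n.choose k : ℝ) * (C / threshold θ n k) ^ k := by
        rw [sum_sigma, mul_sum]
        refine sum_congr rfl fun k _ => ?_
        simp only [sum_const, card_powersetCard, card_univ, Fintype.card_fin, nsmul_eq_mul]
        ring
    _ ≤ α ^ (θ / 2) * ∑ k ∈ Icc 1 n, (n.choose k : ℝ) * (k / (2 * Real.exp 1 * n)) ^ k := by
        gcongr _ * ∑ k ∈ _, _ * ?_ ^ _ with k hk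
        exacts [div_nonneg hC.le (threshold_nonneg n hθ0.le k),
          div_threshold_le n hθ hθ0 hn (mem_Icc.1 hk).1]
    _ ≤ α ^ (θ / 2) :=
        mul_le_of_le_one_right (Real.rpow_nonneg hα0 _) (sum_choose_mul_div_pow_le_one n)

/-- Concentration of measure for product distributions on `ℕ^n`: if each `λᵢ` is a
probability distribution on `ℕ` with `λᵢ(t) ≤ C·α^t/(t+1)²`, then for all
`θ ≥ 8·C·e·n·(1 + ln n)`, the probability that `v ∼ λ₁ × ⋯ × λₙ` has `∑ vᵢ ≥ θ`
is at most `α^{θ/2}`. -/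
theorem stmt_12 (n : ℕ) (hn : 1 ≤ n) (C α : ℝ) (hC : 0 ≤ C) (hα0 : 0 ≤ α) (hα1 : α ≤ 1)
    (lam : Fin n → ℕ → ℝ) (hnonneg : ∀ i t, 0 ≤ lam i t) (hsum : ∀ i, HasSum (lam i) 1)
    (hbound : ∀ i t, lam i t ≤ C * α ^ t / ((t : ℝ) + 1) ^ 2)
    (θ : ℝ) (hθ : 8 * C * Real.exp 1 * n * (1 + Real.log n) ≤ θ) :
    (∑' v : Fin n → ℕ, if θ ≤ (∑ i, (v i : ℝ)) then ∏ i, lam i (v i) else 0) ≤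
      α ^ (θ / 2) :=
  stmt_12_general n hn C α hα0 hα1 lam hnonneg hsum hbound θ hθ
end

section
/- Let Λ be a probability distribution supported on X|_{≤θ} where X = ∏_{i=1}^n {0,1,...,r_i}, and suppose Λ is K-smooth on X|_{≤θ} (K ≥ 1). Then for all nonnegative integers d ≤ θ: Λ(X|_{≤θ}) ≤ K^d · C(n+d, d) · Λ(X|_{≤θ−d}). -/
def mySymMk {α : Type*} {d : ℕ} (m : Multiset α) (h : Multiset.card m = d) : Sym α d := ⟨m, h⟩

lemma multiset_card_sum {α β : Type*} (s : Finset α) (f : α → Multiset β) :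
    Multiset.card (∑ i ∈ s, f i) = ∑ i ∈ s, Multiset.card (f i) := by
  induction s using Finset.cons_induction with
  | empty => simp
  | cons a s ha ih => simp [Finset.sum_cons, ih]

lemma exists_reduce (n w : ℕ) : ∀ s : ℕ, ∀ x : Fin n → ℕ, ∑ i, x i = s →
    ∃ y : Fin n → ℕ, (∀ i, y i ≤ x i) ∧ ∑ i, y i ≤ w ∧ ∑ i, (x i - y i) ≤ s - w := by
  intro s
  induction s using Nat.strong_induction_on with
  | _ s ih =>
    intro x hs
    by_cases h : ∑ i, x i ≤ w
    · exact ⟨x, fun i => le_rfl, h, by simp⟩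
    · push_neg at h
      have hpos : ∃ i, 0 < x i := by
        by_contra hc; push_neg at hc
        have : ∑ i, x i = 0 := Finset.sum_eq_zero (fun i _ => Nat.le_zero.mp (hc i))
        omega
      obtain ⟨i, hi⟩ := hpos
      set x' := Function.update x i (x i - 1) with hx'
      have hs' : ∑ j, x' j = s - 1 := by
        rw [Finset.sum_update_of_mem (Finset.mem_univ i), Finset.sdiff_singleton_eq_erase]
        have := Finset.add_sum_erase Finset.univ x (Finset.mem_univ i)
        omega
      obtain ⟨y, h1, h2, h3⟩ := ih (s - 1) (by omega) x' hs'
      have hyx : ∀ j, y j ≤ x j := by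
        intro j
        by_cases hj : j = i
        · subst hj; have := h1 j; simp [x', Function.update_self] at this; omega
        · have := h1 j; simpa [x', Function.update_of_ne hj] using this
      refine ⟨y, hyx, h2, ?_⟩
      have key : ∀ j, x j - y j = (x' j - y j) + (if j = i then 1 else 0) := by
        intro j
        by_cases hj : j = i
        · subst hj; have := h1 j; simp [x', Function.update_self] at this ⊢; omega
        · simp [x', Function.update_of_ne hj, hj]
      rw [Finset.sum_congr rfl (fun j _ => key j), Finset.sum_add_distrib,
        Finset.sum_ite_eq' Finset.univ i (fun _ => 1)]
      simp only [Finset.mem_univ, if_true]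
      omega

lemma card_fiber_le (n d : ℕ) (y : Fin n → ℕ) (s : Finset (Fin n → ℕ))
    (hs : ∀ x ∈ s, (∀ i, y i ≤ x i) ∧ ∑ i, (x i - y i) ≤ d) :
    s.card ≤ (n + d).choose d := by
  classical
  set m : (Fin n → ℕ) → Multiset (Option (Fin n)) := fun x =>
    (∑ i, (x i - y i) • ({some i} : Multiset (Option (Fin n))))
      + (d - ∑ i, (x i - y i)) • {none} with hm
  have hcount : ∀ x i, (m x).count (some i) = x i - y i := by
    intro x i
    simp only [hm, Multiset.count_add, Multiset.count_nsmul, Multiset.count_singleton,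
      Multiset.count_sum']
    simp [Multiset.count_nsmul, Multiset.count_singleton, Finset.sum_ite_eq]
  have hcardm : ∀ x ∈ s, Multiset.card (m x) = d := by
    intro x hx
    have h2 := (hs x hx).2
    rw [hm]
    simp only [Multiset.card_add, Multiset.card_nsmul, Multiset.card_singleton,
      multiset_card_sum, mul_one]
    omega
  have hle : s.card ≤ (Finset.univ : Finset (Sym (Option (Fin n)) d)).card := by
    apply Finset.card_le_card_of_injOn
      (fun x => if h : x ∈ s then mySymMk (m x) (hcardm x h)
        else Sym.replicate d none)
      (fun _ _ => Finset.mem_univ _)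
    intro a ha b hb hab
    simp only [Finset.mem_coe] at ha hb
    beta_reduce at hab; rw [dif_pos ha, dif_pos hb] at hab
    have hmab : m a = m b := congrArg Subtype.val hab
    funext i
    have h1 := hcount a i
    have h2 := hcount b i
    rw [hmab] at h1
    have := (hs a ha).1 i
    have := (hs b hb).1 i
    omega
  calc s.card ≤ _ := hle
    _ = (n + d).choose d := by
      rw [Finset.card_univ, Sym.card_sym_eq_multichoose, Nat.multichoose_eq, Fintype.card_option,
        Fintype.card_fin]
      congr 1
      omega

/-- The set `X|_{≤w} = {x ∈ ∏ᵢ {0,1,...,rᵢ} : ∑ xᵢ ≤ w}`. -/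
def box (n : ℕ) (r : Fin n → ℕ) (w : ℕ) : Finset (Fin n → ℕ) :=
  (Fintype.piFinset fun i => Finset.range (r i + 1)).filter fun x => ∑ i, x i ≤ w

/-- If `Λ` is a probability distribution supported on `X|_{≤θ}` that is `K`-smooth on
`X|_{≤θ}` (`K ≥ 1`), then for every `d ≤ θ`:
`Λ(X|_{≤θ}) ≤ K^d · C(n+d, d) · Λ(X|_{≤θ−d})`. -/
theorem stmt_13 (n : ℕ) (r : Fin n → ℕ) (K : ℝ) (hK : 1 ≤ K) (θ d : ℕ) (hd : d ≤ θ)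
    (Λ : (Fin n → ℕ) → ℝ)
    (hnn : ∀ x, 0 ≤ Λ x)
    (hsupp : ∀ x, Λ x ≠ 0 → x ∈ box n r θ)
    (hprob : ∑ x ∈ box n r θ, Λ x = 1)
    (hsmooth : ∀ x ∈ box n r θ, ∀ x' ∈ box n r θ,
      |Λ x| ≤ K ^ (∑ i, ((x i : ℤ) - (x' i : ℤ)).natAbs) * |Λ x'|) :
    ∑ x ∈ box n r θ, Λ x ≤
      K ^ d * ((n + d).choose d : ℝ) * ∑ x ∈ box n r (θ - d), Λ x := by
  classical
  have hK0 : (0:ℝ) ≤ K := le_trans zero_le_one hK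
  have hchoice : ∀ x : Fin n → ℕ, ∃ y : Fin n → ℕ,
      (∀ i, y i ≤ x i) ∧ ∑ i, y i ≤ θ - d ∧ ∑ i, (x i - y i) ≤ (∑ i, x i) - (θ - d) :=
    fun x => exists_reduce n (θ - d) (∑ i, x i) x rfl
  set φ : (Fin n → ℕ) → (Fin n → ℕ) := fun x => Classical.choose (hchoice x) with hφ
  have hφ1 : ∀ x, ∀ i, φ x i ≤ x i := fun x => (Classical.choose_spec (hchoice x)).1
  have hφ2 : ∀ x, ∑ i, φ x i ≤ θ - d := fun x => (Classical.choose_spec (hchoice x)).2.1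
  have hφ3 : ∀ x, ∑ i, (x i - φ x i) ≤ (∑ i, x i) - (θ - d) :=
    fun x => (Classical.choose_spec (hchoice x)).2.2
  have hboxθ : ∀ x ∈ box n r θ, (∀ i, x i ≤ r i) ∧ ∑ i, x i ≤ θ := by
    intro x hx
    simp only [box, Finset.mem_filter, Fintype.mem_piFinset, Finset.mem_range] at hx
    exact ⟨fun i => Nat.lt_succ_iff.mp (hx.1 i), hx.2⟩
  have hmem : ∀ x ∈ box n r θ, φ x ∈ box n r (θ - d) := by
    intro x hx
    obtain ⟨h1, h2⟩ := hboxθ x hx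
    simp only [box, Finset.mem_filter, Fintype.mem_piFinset, Finset.mem_range]
    exact ⟨fun i => Nat.lt_succ_iff.mpr ((hφ1 x i).trans (h1 i)), hφ2 x⟩
  have hsub : box n r (θ - d) ⊆ box n r θ := by
    intro y hy
    simp only [box, Finset.mem_filter, Fintype.mem_piFinset, Finset.mem_range] at hy ⊢
    exact ⟨hy.1, hy.2.trans (Nat.sub_le θ d)⟩
  -- pointwise bound
  have hpt : ∀ x ∈ box n r θ, Λ x ≤ K ^ d * Λ (φ x) := by
    intro x hx
    have hmx := hmem x hx
    have hsm := hsmooth x hx (φ x) (hsub hmx)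
    have hexp : (∑ i, ((x i : ℤ) - (φ x i : ℤ)).natAbs) = ∑ i, (x i - φ x i) := by
      refine Finset.sum_congr rfl (fun i _ => ?_)
      have := hφ1 x i
      omega
    have hed : (∑ i, (x i - φ x i)) ≤ d := by
      have := hφ3 x
      have := (hboxθ x hx).2
      omega
    calc Λ x = |Λ x| := (abs_of_nonneg (hnn x)).symm
      _ ≤ K ^ (∑ i, ((x i : ℤ) - (φ x i : ℤ)).natAbs) * |Λ (φ x)| := hsm
      _ ≤ K ^ d * |Λ (φ x)| := by
          apply mul_le_mul_of_nonneg_right _ (abs_nonneg _)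
          rw [hexp]
          exact pow_le_pow_right₀ hK hed
      _ = K ^ d * Λ (φ x) := by rw [abs_of_nonneg (hnn (φ x))]
  calc ∑ x ∈ box n r θ, Λ x ≤ ∑ x ∈ box n r θ, K ^ d * Λ (φ x) :=
        Finset.sum_le_sum hpt
    _ = K ^ d * ∑ x ∈ box n r θ, Λ (φ x) := by rw [Finset.mul_sum]
    _ = K ^ d * ∑ y ∈ box n r (θ - d), ∑ x ∈ (box n r θ).filter (fun x => φ x = y), Λ (φ x) := by
        rw [Finset.sum_fiberwise_of_maps_to hmem]
    _ ≤ K ^ d * ∑ y ∈ box n r (θ - d), ((n + d).choose d : ℝ) * Λ y := by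
        apply mul_le_mul_of_nonneg_left _ (pow_nonneg hK0 d)
        apply Finset.sum_le_sum
        intro y hy
        have hinner : ∑ x ∈ (box n r θ).filter (fun x => φ x = y), Λ (φ x)
            = ((box n r θ).filter (fun x => φ x = y)).card • Λ y := by
          rw [← Finset.sum_const]
          refine Finset.sum_congr rfl (fun x hx => ?_)
          rw [(Finset.mem_filter.mp hx).2]
        rw [hinner, nsmul_eq_mul]
        apply mul_le_mul_of_nonneg_right _ (hnn y)
        have hcard : ((box n r θ).filter (fun x => φ x = y)).card ≤ (n + d).choose d := by
          apply card_fiber_le n d y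
          intro x hx
          obtain ⟨hx1, hx2⟩ := Finset.mem_filter.mp hx
          subst hx2
          refine ⟨hφ1 x, ?_⟩
          have := hφ3 x
          have := (hboxθ x hx1).2
          omega
        exact_mod_cast hcard
    _ = K ^ d * ((n + d).choose d : ℝ) * ∑ x ∈ box n r (θ - d), Λ x := by
        rw [← Finset.mul_sum, mul_assoc]
end
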